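/- arXiv:1211.1533 — 8 statements merged into one kernel-verified Lean document; each statement's English description precedes it below -/
import Mathlib

section
/- Let k → D be a homomorphism of commutative rings making D a flat k-module, and let I ⊆ D be a locally invertible ideal, i.e. for every prime ideal 𝔭 of D the localized ideal I·D_𝔭 is generated by a single element which is a non-zero-divisor of D_𝔭. Then for every n > 0, the map H_n(β̄^k(I²)) → H_n(β̄^k(I)) on homology induced by the inclusion I² ⊆ I is the zero map. -/
set_option synthInstance.maxHeartbeats 1000000
set_option maxHeartbeats 1000000

noncomputable section

open scoped TensorProduct

universe u

variable (k : Type u) [CommRing k] (D : Type u) [CommRing D] [Algebra k D]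

/-- The degree-`n` term of the reduced bar complex `β̄^k(J)` of an ideal `J ⊆ D`:
it is `k` in degree `0` and the `n`-fold tensor power `J ⊗_k ⋯ ⊗_k J` in degree `n`
(realised here as the iterated binary tensor product `J ⊗ (J ⊗ ⋯ (J ⊗ k))`). -/
def BarObj (J : Ideal D) : ℕ → ModuleCat k
  | 0 => ModuleCat.of k k
  | (n + 1) => ModuleCat.of k (J ⊗[k] (BarObj J n))

/-- Multiplication of an ideal `J ⊆ D`, as a `k`-bilinear map. -/
def idealMul (J : Ideal D) : J →ₗ[k] J →ₗ[k] J :=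
  LinearMap.mk₂ k (fun a b => ⟨(a : D) * (b : D), J.mul_mem_left _ b.2⟩)
    (fun a a' b => Subtype.ext (add_mul (a : D) (a' : D) (b : D)))
    (fun c a b => Subtype.ext (smul_mul_assoc c (a : D) (b : D)))
    (fun a b b' => Subtype.ext (mul_add (a : D) (b : D) (b' : D)))
    (fun c a b => Subtype.ext (mul_smul_comm c (a : D) (b : D)))

/-- The differential of the reduced bar complex, from degree `n+1` to degree `n`.
It is zero from degree `1` to degree `0`, and in higher degrees it is the alternating
sum of the maps merging two adjacent tensor factors by multiplication, i.e.
`a₁ ⊗ ⋯ ⊗ aₘ ↦ Σ_{i=1}^{m-1} (-1)^{i-1} a₁ ⊗ ⋯ ⊗ (aᵢaᵢ₊₁) ⊗ ⋯ ⊗ aₘ`,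
presented via the recursion `d(a ⊗ ω) = (merge first two factors of a ⊗ ω) - a ⊗ d(ω)`. -/
def barD (J : Ideal D) : (n : ℕ) → (BarObj k D J (n + 1) →ₗ[k] BarObj k D J n)
  | 0 => 0
  | (n + 1) =>
      show (↥J ⊗[k] (↥J ⊗[k] (BarObj k D J n))) →ₗ[k] (↥J ⊗[k] (BarObj k D J n)) from
      ((TensorProduct.map (TensorProduct.lift (idealMul k D J)) LinearMap.id).comp
        ((TensorProduct.assoc k J J (BarObj k D J n)).symm.toLinearMap))
      - TensorProduct.map (LinearMap.id : J →ₗ[k] J)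
          (show (↥J ⊗[k] (BarObj k D J n)) →ₗ[k] (BarObj k D J n) from barD J n)

/-- The inclusion of ideals `J ≤ J'`, as a `k`-linear map. -/
def idealIncl {J J' : Ideal D} (h : J ≤ J') : J →ₗ[k] J' where
  toFun x := ⟨x.1, h x.2⟩
  map_add' _ _ := rfl
  map_smul' _ _ := rfl

/-- The chain map `β̄^k(J) → β̄^k(J')` induced by an inclusion of ideals `J ≤ J'`. -/
def barIncl (J J' : Ideal D) (h : J ≤ J') :
    (n : ℕ) → (BarObj k D J n →ₗ[k] BarObj k D J' n)
  | 0 => LinearMap.id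
  | (n + 1) =>
      show (↥J ⊗[k] (BarObj k D J n)) →ₗ[k] (↥J' ⊗[k] (BarObj k D J' n)) from
      TensorProduct.map (idealIncl k D h) (barIncl J J' h n)

/-!
Let `x` be a cycle of `β̄(I²)` and `ξ` its image in `β̄(I)`. Let `D` act on the chains of
positive degree through the first tensor factor; the differential is `D`-linear, so the `θ ∈ D`
with `θ • ξ` a boundary form an ideal, and it suffices to find such a `θ` outside every maximal
ideal `𝔭`. Near `𝔭` the ideal `I` is generated by a non-zero-divisor `i ∈ I`, hence `I² = i I`
there and `s • ξ = i • w` for some `s ∉ 𝔭` and some chain `w` of `β̄(I)`. Then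
`i • d w = s • d ξ = 0`. As `I` is flat over `D`, hence over `k`, multiplication by `i` on
`I ⊗ β̄(I)` is injective up to `𝔭`-torsion, so `d (t • w) = 0` for some `t ∉ 𝔭`, and finally
`d (i ⊗ t • w) = i t • w - i ⊗ d (t • w) = t s • ξ`.
-/

open TensorProduct

section Torsion

variable {R A M W : Type*} [CommRing R] [CommRing A] [Algebra R A]
  [AddCommGroup M] [Module A M] [Module R M] [IsScalarTower R A M]
  [AddCommGroup W] [Module R W]

theorem Submodule.mem_of_forall_isMaximal_exists_smul_mem (N : Submodule A M) (m : M)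
    (h : ∀ P : Ideal A, P.IsMaximal → ∃ s ∉ P, s • m ∈ N) : m ∈ N := by
  by_contra hm
  obtain ⟨P, hP, hle⟩ := Ideal.exists_le_maximal (N.comap (LinearMap.toSpanSingleton A M m))
    (by rwa [Ne, Ideal.eq_top_iff_one, Submodule.mem_comap, LinearMap.toSpanSingleton_apply,
      one_smul])
  obtain ⟨s, hs, hsm⟩ := h P hP
  exact hs (hle hsm)

theorem IsSMulRegular.rTensor_of_isScalarTower [Module.Flat R W] {a : A}
    (ha : IsSMulRegular M a) : IsSMulRegular (M ⊗[R] W) a :=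
  Module.Flat.rTensor_preserves_injective_linearMap (Algebra.lsmul R R M a) ha

theorem mem_torsion'_of_rTensor_mkQ_eq_zero (S : Submonoid A) {ζ : M ⊗[R] W}
    (hζ : AlgebraTensorModule.rTensor R W (Submodule.torsion' A M S).mkQ ζ = 0) :
    ζ ∈ Submodule.torsion' A (M ⊗[R] W) S := by
  set T := Submodule.torsion' A M S
  obtain ⟨ξ, rfl⟩ := (rTensor_exact W (LinearMap.exact_subtype_mkQ (T.restrictScalars R))
    (Submodule.mkQ_surjective _) ζ).mp hζ
  clear hζ
  induction ξ using TensorProduct.induction_on with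
  | zero => simp
  | tmul c w =>
    obtain ⟨s, hs⟩ := (Submodule.mem_torsion'_iff S _).mp c.2
    refine (Submodule.mem_torsion'_iff S _).mpr ⟨s, ?_⟩
    rw [LinearMap.rTensor_tmul, Submonoid.smul_def, smul_tmul', ← Submonoid.smul_def]
    simp [hs]
  | add ξ₁ ξ₂ h₁ h₂ => simpa using add_mem h₁ h₂

theorem isSMulRegular_quotient_torsion' (S : Submonoid A) {a : A}
    (h : ∀ m : M, a • m = 0 → m ∈ Submodule.torsion' A M S) :
    IsSMulRegular (M ⧸ Submodule.torsion' A M S) a := by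
  refine IsSMulRegular.of_right_eq_zero_of_smul fun x hx => ?_
  induction x using Submodule.Quotient.induction_on with | _ m
  rw [← Submodule.Quotient.mk_smul, Submodule.Quotient.mk_eq_zero,
    Submodule.mem_torsion'_iff] at hx
  rw [Submodule.Quotient.mk_eq_zero]
  obtain ⟨s, hs⟩ := hx
  obtain ⟨t, ht⟩ := (Submodule.mem_torsion'_iff S _).mp
    (h ((s : A) • m) (by rw [smul_comm, ← Submonoid.smul_def, hs]))
  exact (Submodule.mem_torsion'_iff S _).mpr ⟨t * s, by rw [mul_smul]; exact ht⟩

theorem mem_torsion'_of_smul_eq_zero [Module.Flat R W] (S : Submonoid A) {a : A}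
    (ha : IsSMulRegular (M ⧸ Submodule.torsion' A M S) a) {ζ : M ⊗[R] W} (h : a • ζ = 0) :
    ζ ∈ Submodule.torsion' A (M ⊗[R] W) S := by
  apply mem_torsion'_of_rTensor_mkQ_eq_zero
  apply ha.rTensor_of_isScalarTower (W := W)
  change a • _ = a • 0
  rw [← map_smul, h, map_zero, smul_zero]

end Torsion

section LocallyPrincipal

variable {A B : Type*} [CommRing A] [CommRing B] [Algebra A B]

theorem Module.Flat.span_singleton_of_mem_nonZeroDivisors {a : A} (ha : a ∈ nonZeroDivisors A) :
    Module.Flat A (Ideal.span {a}) := by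
  rw [Ideal.span, LinearMap.span_singleton_eq_range]
  refine .of_linearEquiv (LinearEquiv.ofInjective _ fun x y hxy => ?_).symm
  rw [LinearMap.toSpanSingleton_apply, LinearMap.toSpanSingleton_apply, smul_eq_mul,
    smul_eq_mul, ← sub_eq_zero, ← sub_mul] at hxy
  exact sub_eq_zero.mp (mem_nonZeroDivisors_iff_right.mp ha _ hxy)

theorem Ideal.flat_of_forall_map_eq_span_singleton (I : Ideal A)
    (h : ∀ (P : Ideal A) [P.IsMaximal], ∃ g : Localization.AtPrime P,
      I.map (algebraMap A (Localization.AtPrime P)) = Ideal.span {g} ∧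
        g ∈ nonZeroDivisors (Localization.AtPrime P)) :
    Module.Flat A I := by
  refine Module.flat_of_isLocalized_maximal A I
    (fun P _ => I.localized' (Localization.AtPrime P) P.primeCompl
      (Algebra.linearMap A (Localization.AtPrime P)))
    (fun P _ => I.toLocalized' (Localization.AtPrime P) P.primeCompl
      (Algebra.linearMap A (Localization.AtPrime P)))
    fun P _ => ?_
  obtain ⟨g, hg, hg0⟩ := h P
  rw [Ideal.localized'_eq_map, hg]
  have := Module.Flat.span_singleton_of_mem_nonZeroDivisors hg0
  exact .trans A (Localization.AtPrime P) _

theorem IsLocalization.exists_mem_map_eq_span_singleton_algebraMap (M : Submonoid A)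
    [IsLocalization M B] {I : Ideal A} {g : B}
    (hI : I.map (algebraMap A B) = Ideal.span {g}) (hg : g ∈ nonZeroDivisors B) :
    ∃ i ∈ I, I.map (algebraMap A B) = Ideal.span {algebraMap A B i} ∧
      algebraMap A B i ∈ nonZeroDivisors B := by
  obtain ⟨⟨i, u⟩, hiu⟩ :=
    (IsLocalization.mem_map_algebraMap_iff M B).mp (hI ▸ Ideal.mem_span_singleton_self g)
  have hu : IsUnit (algebraMap A B u) := IsLocalization.map_units B u
  refine ⟨i, i.2, ?_, ?_⟩
  · rw [← hiu, Ideal.span_singleton_mul_right_unit hu, hI]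
  · rw [← hiu]
    exact mul_mem hg hu.mem_nonZeroDivisors

variable (M : Submonoid A) [IsLocalization M B]

theorem IsLocalization.exists_mul_eq_mul_of_mem_sq {I : Ideal A} {i : A}
    (hI : I.map (algebraMap A B) = Ideal.span {algebraMap A B i}) {a : A} (ha : a ∈ I ^ 2) :
    ∃ s ∈ M, ∃ b ∈ I, s * a = i * b := by
  have hmap : algebraMap A B a ∈ (Ideal.span {i} * I).map (algebraMap A B) := by
    rw [Ideal.map_mul, Ideal.map_span, Set.image_singleton, ← hI, ← sq, ← Ideal.map_pow]
    exact Ideal.mem_map_of_mem _ ha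
  obtain ⟨s, hs, hsa⟩ := (IsLocalization.algebraMap_mem_map_algebraMap_iff M B _ a).mp hmap
  obtain ⟨b, hb, e⟩ := Ideal.mem_span_singleton_mul.mp hsa
  exact ⟨s, hs, b, hb, e.symm⟩

theorem IsLocalization.isSMulRegular_quotient_torsion' (I : Ideal A) {i : A}
    (hi : algebraMap A B i ∈ nonZeroDivisors B) :
    IsSMulRegular (I ⧸ Submodule.torsion' A I M) i := by
  refine _root_.isSMulRegular_quotient_torsion' M fun c hc => ?_
  have hc0 : algebraMap A B c = 0 := by
    refine mem_nonZeroDivisors_iff_right.mp hi _ ?_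
    rw [← map_mul, mul_comm, ← smul_eq_mul, ← Submodule.coe_smul, hc, ZeroMemClass.coe_zero,
      map_zero]
  obtain ⟨t, ht⟩ := (IsLocalization.map_eq_zero_iff M B _).mp hc0
  exact (Submodule.mem_torsion'_iff M _).mpr ⟨t, Subtype.ext ht⟩

end LocallyPrincipal

variable {k D}

section BarComplex

variable (J : Ideal D)

-- `barD` in positive degree, with source and target written as tensor products, so that `D`
-- acts on them through the first factor; `barInclSucc` below is the analogue for `barIncl`.
def barDSucc (m : ℕ) : J ⊗[k] BarObj k D J (m + 1) →ₗ[k] J ⊗[k] BarObj k D J m :=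
  barD k D J (m + 1)

-- The second factor is typed as `BarObj k D J (m + 1)`, as in the goals produced by
-- `TensorProduct.induction_on`, so that the lemma rewrites there.
theorem barDSucc_tmul (m : ℕ) (a : J) (τ : J ⊗[k] BarObj k D J m) :
    barDSucc J m (tmul k (N := BarObj k D J (m + 1)) a τ) =
      (a : D) • τ - a ⊗ₜ barD k D J m τ := by
  have merge : ∀ τ : J ⊗[k] BarObj k D J m,
      map (lift (idealMul k D J)) LinearMap.id ((TensorProduct.assoc k J J _).symm (a ⊗ₜ τ)) =
        (a : D) • τ := by
    intro τ
    induction τ using TensorProduct.induction_on with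
    | zero => simp
    | tmul b ρ => rfl
    | add u v hu hv => simp only [tmul_add, map_add, hu, hv, smul_add]
  exact congrArg₂ (· - ·) (merge τ) rfl

theorem barDSucc_smul (m : ℕ) (d : D) (v : J ⊗[k] BarObj k D J (m + 1)) :
    barDSucc J m (d • v) = d • barDSucc J m v := by
  induction v using TensorProduct.induction_on with
  | zero => rw [smul_zero, map_zero, smul_zero]
  | tmul a τ =>
    rw [smul_tmul', barDSucc_tmul J m _ τ, barDSucc_tmul J m _ τ]
    -- retype `τ : BarObj k D J (m + 1)` as an element of `J ⊗[k] BarObj k D J m`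
    obtain ⟨τ, rfl⟩ : ∃ τ' : J ⊗[k] BarObj k D J m, τ' = τ := ⟨τ, rfl⟩
    rw [smul_sub, smul_smul, smul_tmul']
    rfl
  | add u v hu hv => rw [smul_add, map_add, map_add, hu, hv, smul_add]

variable {J} {J' : Ideal D} (h : J ≤ J')

def barInclSucc (m : ℕ) : J ⊗[k] BarObj k D J m →ₗ[k] J' ⊗[k] BarObj k D J' m :=
  barIncl k D J J' h (m + 1)

theorem barInclSucc_tmul (m : ℕ) (a : J) (τ : BarObj k D J m) :
    barInclSucc h m (a ⊗ₜ τ) = idealIncl k D h a ⊗ₜ barIncl k D J J' h m τ :=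
  rfl

theorem barInclSucc_smul (m : ℕ) (d : D) (v : J ⊗[k] BarObj k D J m) :
    barInclSucc h m (d • v) = d • barInclSucc h m v := by
  induction v using TensorProduct.induction_on with
  | zero => rw [smul_zero, map_zero, smul_zero]
  | tmul a τ => rfl
  | add u v hu hv => rw [smul_add, map_add, map_add, hu, hv, smul_add]

theorem barD_barInclSucc :
    ∀ (m : ℕ) (v : J ⊗[k] BarObj k D J m),
      barD k D J' m (barInclSucc h m v) = barIncl k D J J' h m (barD k D J m v)
  | 0, _ => rfl
  | m + 1, v => by
    change barDSucc J' m (barInclSucc h (m + 1) v) = barInclSucc h m (barDSucc J m v)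
    induction v using TensorProduct.induction_on with
    | zero => simp only [map_zero]
    | tmul a τ =>
      rw [barDSucc_tmul J m a τ, barInclSucc_tmul,
        barDSucc_tmul J' m _ (barIncl k D J J' h (m + 1) τ)]
      obtain ⟨τ, rfl⟩ : ∃ τ' : J ⊗[k] BarObj k D J m, τ' = τ := ⟨τ, rfl⟩
      rw [map_sub, barInclSucc_smul]
      exact congrArg₂ (· - ·) rfl (congrArg (idealIncl k D h a ⊗ₜ ·) (barD_barInclSucc m τ))
    | add u v hu hv => simp only [map_add, hu, hv]

instance BarObj.flat [Module.Flat k J] : ∀ m, Module.Flat k (BarObj k D J m)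
  | 0 => inferInstanceAs (Module.Flat k k)
  | m + 1 =>
    have := BarObj.flat m
    inferInstanceAs (Module.Flat k (J ⊗[k] BarObj k D J m))

variable (J) in
def barBoundaries (m : ℕ) : Submodule D (J ⊗[k] BarObj k D J m) where
  __ := LinearMap.range (barDSucc J m)
  smul_mem' d _ := fun ⟨y, hy⟩ => ⟨d • y, by rw [barDSucc_smul, hy]⟩

theorem barD_smul_of_eq_zero {n : ℕ} {ξ : J ⊗[k] BarObj k D J n} (hξ : barD k D J n ξ = 0)
    (d : D) : barD k D J n (d • ξ) = 0 := by
  cases n with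
  | zero => rfl
  | succ m =>
    change barDSucc J m ξ = 0 at hξ
    exact (barDSucc_smul J m d ξ).trans ((congrArg _ hξ).trans (smul_zero d))

theorem exists_barD_smul_eq_zero [Module.Flat k J] {S : Submonoid D} {i : D}
    (hi : IsSMulRegular (J ⧸ Submodule.torsion' D J S) i) {n : ℕ}
    {w : J ⊗[k] BarObj k D J n} (hw : barD k D J n (i • w) = 0) :
    ∃ t ∈ S, barD k D J n (t • w) = 0 := by
  cases n with
  | zero => exact ⟨1, S.one_mem, rfl⟩
  | succ m =>
    have hiw : i • barDSucc J m w = 0 := (barDSucc_smul J m i w).symm.trans hw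
    obtain ⟨t, ht⟩ := (Submodule.mem_torsion'_iff S _).mp (mem_torsion'_of_smul_eq_zero S hi hiw)
    exact ⟨t, t.2, (barDSucc_smul J m t w).trans ht⟩

theorem exists_smul_eq_smul_map_idealIncl {S : Submonoid D} {i : D}
    (hdiv : ∀ a ∈ J, ∃ s ∈ S, ∃ b ∈ J', s * a = i * b) {W W' : Type*} [AddCommGroup W]
    [Module k W] [AddCommGroup W'] [Module k W'] (g : W' →ₗ[k] W) (x : J ⊗[k] W') :
    ∃ s ∈ S, ∃ w : J' ⊗[k] W, i • w = s • map (idealIncl k D h) g x := by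
  induction x using TensorProduct.induction_on with
  | zero => exact ⟨1, S.one_mem, 0, by rw [smul_zero, map_zero, smul_zero]⟩
  | tmul a w' =>
    obtain ⟨s, hs, b, hb, e⟩ := hdiv a a.2
    refine ⟨s, hs, ⟨b, hb⟩ ⊗ₜ g w', ?_⟩
    rw [map_tmul, smul_tmul', smul_tmul']
    congr 1
    exact Subtype.ext e.symm
  | add x₁ x₂ h₁ h₂ =>
    obtain ⟨s₁, hs₁, w₁, hw₁⟩ := h₁
    obtain ⟨s₂, hs₂, w₂, hw₂⟩ := h₂
    refine ⟨s₁ * s₂, S.mul_mem hs₁ hs₂, s₂ • w₁ + s₁ • w₂, ?_⟩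
    rw [smul_add, smul_comm i s₂, hw₁, smul_comm i s₁, hw₂, map_add, smul_add, smul_smul,
      smul_smul, mul_comm s₂]

end BarComplex

theorem exists_smul_mem_barBoundaries {I : Ideal D} (h : I ^ 2 ≤ I) [Module.Flat k I]
    {P : Ideal D} [P.IsPrime] {i : D} (hiI : i ∈ I)
    (hI : I.map (algebraMap D (Localization.AtPrime P)) =
      Ideal.span {algebraMap D (Localization.AtPrime P) i})
    (hi : algebraMap D (Localization.AtPrime P) i ∈ nonZeroDivisors (Localization.AtPrime P))
    {n : ℕ} {x : ↥(I ^ 2) ⊗[k] BarObj k D (I ^ 2) n} (hx : barD k D (I ^ 2) n x = 0) :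
    ∃ θ ∉ P, θ • barInclSucc h n x ∈ barBoundaries I n := by
  have hξ : barD k D I n (barInclSucc h n x) = 0 := by
    rw [barD_barInclSucc, hx, map_zero]
  obtain ⟨s, hs, w, hw⟩ := exists_smul_eq_smul_map_idealIncl h
    (fun a ha => IsLocalization.exists_mul_eq_mul_of_mem_sq P.primeCompl hI ha)
    (barIncl k D (I ^ 2) I h n) x
  change i • w = s • barInclSucc h n x at hw
  obtain ⟨t, ht, hwt⟩ := exists_barD_smul_eq_zero
    (IsLocalization.isSMulRegular_quotient_torsion' P.primeCompl I hi)
    (hw ▸ barD_smul_of_eq_zero hξ s)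
  refine ⟨t * s, P.primeCompl.mul_mem ht hs, ⟨i, hiI⟩ ⊗ₜ (t • w), ?_⟩
  calc barDSucc I n (⟨i, hiI⟩ ⊗ₜ (t • w)) = i • t • w := by
        rw [barDSucc_tmul, hwt, tmul_zero, sub_zero]
    _ = (t * s) • barInclSucc h n x := by rw [smul_comm, hw, smul_smul]

/-- Let `k → D` be a flat homomorphism of commutative rings and
`I ⊆ D` a locally invertible ideal (at every prime `𝔭` of `D`, the ideal `I·D_𝔭` is
generated by a single non-zero-divisor of `D_𝔭`).  Then for every `n > 0` the map
`H_n(β̄^k(I²)) → H_n(β̄^k(I))` induced by the inclusion `I² ⊆ I` is zero, i.e. every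
degree-`(n+1)` cycle of `β̄^k(I²)` maps to a boundary of `β̄^k(I)`. -/
theorem bar_homology_map_of_sq_zero
    [Module.Flat k D] (I : Ideal D)
    (hloc : ∀ (𝔭 : Ideal D) (_ : 𝔭.IsPrime),
      ∃ g : Localization.AtPrime 𝔭,
        I.map (algebraMap D (Localization.AtPrime 𝔭)) = Ideal.span {g} ∧
        g ∈ nonZeroDivisors (Localization.AtPrime 𝔭)) :
    ∀ (n : ℕ) (x : BarObj k D (I ^ 2) (n + 1)),
      barD k D (I ^ 2) n x = 0 →
        ∃ y : BarObj k D I (n + 2),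
          barD k D I (n + 1) y =
            barIncl k D (I ^ 2) I (Ideal.pow_le_self two_ne_zero) (n + 1) x := by
  intro n x hx
  have : Module.Flat D I := I.flat_of_forall_map_eq_span_singleton fun P _ => hloc P inferInstance
  have : Module.Flat k I := .trans k D I
  have hξ : barInclSucc (Ideal.pow_le_self two_ne_zero) n x ∈ barBoundaries I n := by
    refine Submodule.mem_of_forall_isMaximal_exists_smul_mem _ _ fun P hP => ?_
    obtain ⟨g, hg, hg0⟩ := hloc P hP.isPrime
    obtain ⟨i, hiI, hI, hi⟩ :=
      IsLocalization.exists_mem_map_eq_span_singleton_algebraMap P.primeCompl hg hg0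
    exact exists_smul_mem_barBoundaries _ hiI hI hi hx
  obtain ⟨y, hy⟩ := hξ
  exact ⟨y, hy⟩

end
end

section
/- Let R be a commutative ℚ-algebra, J ⊆ R a nilpotent ideal, and n ≥ 1 an integer. Then the kernel of the natural map K_n^M(R) → K_n^M(R/J) is a divisible abelian group: every element of the kernel is an m-th multiple of an element of the kernel, for every integer m ≥ 1. -/
/-!
Over `ℚ`, Newton's method for `X ^ m - c` shows that every element of `1 + J` has a unique
`m`-th root of the form `1 + (nilpotent)`, and uniqueness modulo `J` places it in `1 + J`. So the
kernel of `Rˣ → (R ⧸ J)ˣ` is divisible, hence an injective `ℤ`-module, and this surjection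
splits. For a split surjection, the kernel of its `n`-th tensor power is spanned by the pure
tensors with a factor in the kernel, which is again divisible. Steinberg relations of `R ⧸ J`
lift to Steinberg relations of `R` (lift `ā`, and lift `1 - ā` to `1 - a`), so this kernel
surjects onto the kernel on Milnor K-groups.
-/

noncomputable section

open scoped TensorProduct

/-- The `n`-fold tensor power over `ℤ` of the (additivised) unit group of `R`. -/
abbrev MilnorPre (R : Type*) [CommRing R] (n : ℕ) : Type _ :=
  PiTensorProduct ℤ fun _ : Fin n => Additive Rˣ

/-- The submodule of Steinberg relations: it is spanned by the elementary tensors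
`a₁ ⊗ ⋯ ⊗ aₙ` of units such that `aᵢ + aᵢ₊₁ = 1` in `R` for some `i`. -/
def steinbergRel (R : Type*) [CommRing R] (n : ℕ) : Submodule ℤ (MilnorPre R n) :=
  Submodule.span ℤ {x | ∃ a : Fin n → Rˣ,
    (∃ i : Fin n, ∃ h : (i : ℕ) + 1 < n, ((a i : R) + (a ⟨(i : ℕ) + 1, h⟩ : R) = 1)) ∧
    x = PiTensorProduct.tprod ℤ fun i => Additive.ofMul (a i)}

/-- The `n`-th Milnor K-group of a commutative ring `R`. -/
def MilnorK (R : Type*) [CommRing R] (n : ℕ) : Type _ :=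
  MilnorPre R n ⧸ steinbergRel R n

instance (R : Type*) [CommRing R] (n : ℕ) : AddCommGroup (MilnorK R n) :=
  inferInstanceAs (AddCommGroup (MilnorPre R n ⧸ steinbergRel R n))

instance (R : Type*) [CommRing R] (n : ℕ) : Module ℤ (MilnorK R n) :=
  inferInstanceAs (Module ℤ (MilnorPre R n ⧸ steinbergRel R n))

/-- The Steinberg symbol `{a₁, …, aₙ} ∈ K_n^M(R)`. -/
def milnorSymbol {R : Type*} [CommRing R] {n : ℕ} (a : Fin n → Rˣ) : MilnorK R n :=
  Submodule.Quotient.mk (PiTensorProduct.tprod ℤ fun i => Additive.ofMul (a i))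

/-- The map on tensor powers of unit groups induced by a ring homomorphism. -/
def milnorPreMap {R S : Type*} [CommRing R] [CommRing S] (f : R →+* S) (n : ℕ) :
    MilnorPre R n →ₗ[ℤ] MilnorPre S n :=
  PiTensorProduct.map fun _ =>
    (MonoidHom.toAdditive (Units.map (f : R →* S))).toIntLinearMap

theorem milnorPreMap_steinberg {R S : Type*} [CommRing R] [CommRing S] (f : R →+* S)
    (n : ℕ) : steinbergRel R n ≤ (steinbergRel S n).comap (milnorPreMap f n) := by
  refine Submodule.span_le.mpr ?_
  rintro x ⟨a, ⟨i, hi, hsum⟩, rfl⟩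
  refine Submodule.mem_comap.mpr ?_
  rw [milnorPreMap, PiTensorProduct.map_tprod]
  refine Submodule.subset_span ⟨fun j => Units.map (f : R →* S) (a j), ⟨i, hi, ?_⟩, rfl⟩
  simp only [Units.coe_map, MonoidHom.coe_coe, ← map_add, hsum, map_one]

/-- The map `K_n^M(R) → K_n^M(S)` induced by a ring homomorphism `f : R → S`. -/
def milnorMap {R S : Type*} [CommRing R] [CommRing S] (f : R →+* S) (n : ℕ) :
    MilnorK R n →ₗ[ℤ] MilnorK S n :=
  Submodule.mapQ (steinbergRel R n) (steinbergRel S n) (milnorPreMap f n)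
    (milnorPreMap_steinberg f n)

open Polynomial in
theorem existsUnique_pow_eq_of_isNilpotent_sub_one {A : Type*} [CommRing A] [Algebra ℚ A]
    {m : ℕ} (hm : m ≠ 0) {c : A} (hc : IsNilpotent (c - 1)) :
    ∃! r : A, IsNilpotent (r - 1) ∧ r ^ m = c := by
  have hunit : IsUnit (m : A) := by
    simpa using (IsUnit.mk0 (m : ℚ) (by exact_mod_cast hm)).map (algebraMap ℚ A)
  have hroot := existsUnique_nilpotent_sub_and_aeval_eq_zero (P := X ^ m - C c) (x := (1 : A))
    (by simpa using hc.neg) (by simpa [derivative_X_pow] using hunit)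
  have hsymm (r : A) : IsNilpotent (1 - r) ↔ IsNilpotent (r - 1) := by
    rw [← isNilpotent_neg_iff, neg_sub]
  simpa [hsymm, sub_eq_zero] using hroot

theorem LinearMap.exists_comp_eq_id_of_divisible_ker {M N : Type*} [AddCommGroup M]
    [AddCommGroup N] (φ : M →ₗ[ℤ] N) (hφ : Function.Surjective φ)
    (hdiv : ∀ m : ℕ, m ≠ 0 → ∀ x ∈ ker φ, ∃ y ∈ ker φ, m • y = x) :
    ∃ σ : N →ₗ[ℤ] M, φ ∘ₗ σ = LinearMap.id := by
  let : DivisibleBy (ker φ) ℕ := divisibleByOfSMulRightSurj _ _ fun {m} hm x => by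
    obtain ⟨y, hy, hyx⟩ := hdiv m hm x x.2
    exact ⟨⟨y, hy⟩, Subtype.ext hyx⟩
  let : DivisibleBy (ker φ) ℤ := AddGroup.divisibleByIntOfDivisibleByNat _
  have hsplit := (φ.exact_subtype_ker_map.split_tfae (ker φ).injective_subtype hφ).out 0 1
  exact hsplit.mpr <| (Module.Baer.of_divisible (ker φ)).extension_property (ker φ).subtype
    (ker φ).injective_subtype LinearMap.id

section PiTensor

variable {R : Type*} [CommRing R] {M N : Type*} [AddCommGroup M] [Module R M]
  [AddCommGroup N] [Module R N] {ι : Type*}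

def spanTprodWithFactorIn (K : Submodule R M) (ι : Type*) : Submodule R (⨂[R] _ : ι, M) :=
  Submodule.span R {x | ∃ c : ι → M, (∃ i, c i ∈ K) ∧ PiTensorProduct.tprod R c = x}

theorem spanTprodWithFactorIn_ker_le_ker_map (φ : M →ₗ[R] N) :
    spanTprodWithFactorIn (LinearMap.ker φ) ι ≤
      LinearMap.ker (PiTensorProduct.map fun _ : ι => φ) := by
  rw [spanTprodWithFactorIn, Submodule.span_le]
  rintro _ ⟨c, ⟨i, hi⟩, rfl⟩
  rw [SetLike.mem_coe, LinearMap.mem_ker, PiTensorProduct.map_tprod]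
  exact MultilinearMap.map_coord_zero _ i hi

theorem sub_map_mem_spanTprodWithFactorIn [Fintype ι] [LinearOrder ι] {K : Submodule R M}
    {ψ : M →ₗ[R] M} (hψ : ∀ x, x - ψ x ∈ K) (z : ⨂[R] _ : ι, M) :
    z - PiTensorProduct.map (fun _ => ψ) z ∈ spanTprodWithFactorIn K ι := by
  induction z using PiTensorProduct.induction_on with
  | smul_tprod r c =>
    rw [LinearMap.map_smul, PiTensorProduct.map_tprod, ← smul_sub]
    refine Submodule.smul_mem _ _ ?_
    have htelescope :=
      (PiTensorProduct.tprod R).map_sub_map_piecewise c (fun i => ψ (c i)) Finset.univ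
    rw [Finset.piecewise_univ] at htelescope
    rw [htelescope]
    refine Submodule.sum_mem _ fun i _ => Submodule.subset_span ⟨_, ⟨i, ?_⟩, rfl⟩
    simpa using hψ (c i)
  | add u v hu hv =>
    rw [map_add, add_sub_add_comm]
    exact add_mem hu hv

theorem ker_map_eq_spanTprodWithFactorIn [Fintype ι] [LinearOrder ι] {φ : M →ₗ[R] N}
    {σ : N →ₗ[R] M} (hσ : φ ∘ₗ σ = LinearMap.id) :
    LinearMap.ker (PiTensorProduct.map fun _ : ι => φ) =
      spanTprodWithFactorIn (LinearMap.ker φ) ι := by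
  refine le_antisymm (fun z hz => ?_) (spanTprodWithFactorIn_ker_le_ker_map φ)
  have hψ (x : M) : x - (σ ∘ₗ φ) x ∈ LinearMap.ker φ := by
    simp [← LinearMap.comp_apply φ σ, hσ]
  have hz' : PiTensorProduct.map (fun _ : ι => σ ∘ₗ φ) z = 0 := by
    rw [PiTensorProduct.map_comp, LinearMap.comp_apply, LinearMap.mem_ker.mp hz, map_zero]
  simpa [hz'] using sub_map_mem_spanTprodWithFactorIn hψ z

theorem exists_nsmul_eq_of_mem_spanTprodWithFactorIn {K : Submodule R M} {m : ℕ}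
    (hK : ∀ x ∈ K, ∃ y ∈ K, m • y = x) {z : ⨂[R] _ : ι, M}
    (hz : z ∈ spanTprodWithFactorIn K ι) :
    ∃ y ∈ spanTprodWithFactorIn K ι, m • y = z := by
  classical
  induction hz using Submodule.span_induction with
  | mem _ h =>
    obtain ⟨c, ⟨i, hi⟩, rfl⟩ := h
    obtain ⟨y, hy, hmy⟩ := hK (c i) hi
    refine ⟨PiTensorProduct.tprod R (Function.update c i y),
      Submodule.subset_span ⟨_, ⟨i, by rwa [Function.update_self]⟩, rfl⟩, ?_⟩
    rw [← Nat.cast_smul_eq_nsmul R, ← MultilinearMap.map_update_smul, Nat.cast_smul_eq_nsmul,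
      hmy, Function.update_eq_self]
  | zero => exact ⟨0, zero_mem _, nsmul_zero _⟩
  | add _ _ _ _ hu hv =>
    obtain ⟨y₁, hy₁, rfl⟩ := hu
    obtain ⟨y₂, hy₂, rfl⟩ := hv
    exact ⟨y₁ + y₂, add_mem hy₁ hy₂, nsmul_add _ _ _⟩
  | smul a _ _ hu =>
    obtain ⟨y, hy, rfl⟩ := hu
    exact ⟨a • y, Submodule.smul_mem _ _ hy, smul_comm _ _ _⟩

end PiTensor

section Units

variable {R S : Type*} [CommRing R] [CommRing S]

def unitsLinearMap (f : R →+* S) : Additive Rˣ →ₗ[ℤ] Additive Sˣ :=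
  (MonoidHom.toAdditive (Units.map (f : R →* S))).toIntLinearMap

theorem milnorPreMap_eq_map_unitsLinearMap (f : R →+* S) (n : ℕ) :
    milnorPreMap f n = PiTensorProduct.map fun _ => unitsLinearMap f :=
  rfl

theorem unitsLinearMap_surjective {f : R →+* S} (hf : Function.Surjective f) [IsLocalHom f] :
    Function.Surjective (unitsLinearMap f) :=
  IsLocalRing.surjective_units_map_of_local_ringHom f hf ‹_›

theorem ofMul_mem_ker_unitsLinearMap_mk_iff (J : Ideal R) (u : Rˣ) :
    Additive.ofMul u ∈ LinearMap.ker (unitsLinearMap (Ideal.Quotient.mk J)) ↔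
      (u : R) - 1 ∈ J := by
  rw [LinearMap.mem_ker, ← Ideal.Quotient.eq]
  simp [unitsLinearMap, Units.ext_iff]

theorem isLocalHom_quotient_mk_of_isNilpotent {J : Ideal R} (hJ : IsNilpotent J) :
    IsLocalHom (Ideal.Quotient.mk J) :=
  ⟨fun _ h => hJ.isUnit_quotient_mk_iff.mp h⟩

theorem exists_nsmul_eq_of_mem_ker_unitsLinearMap_mk [Algebra ℚ R] {J : Ideal R}
    (hJ : IsNilpotent J) {m : ℕ} (hm : m ≠ 0) {x : Additive Rˣ}
    (hx : x ∈ LinearMap.ker (unitsLinearMap (Ideal.Quotient.mk J))) :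
    ∃ y ∈ LinearMap.ker (unitsLinearMap (Ideal.Quotient.mk J)), m • y = x := by
  obtain ⟨k, hk⟩ := hJ
  obtain ⟨u, rfl⟩ := Additive.ofMul.surjective x
  have hu : (u : R) - 1 ∈ J := (ofMul_mem_ker_unitsLinearMap_mk_iff J u).mp hx
  obtain ⟨r, ⟨hr, hru⟩, -⟩ := existsUnique_pow_eq_of_isNilpotent_sub_one hm (c := (u : R))
    ⟨k, by simpa [hk] using Ideal.pow_mem_pow hu k⟩
  -- `r` and `1` are both `m`-th roots of `1` in `R ⧸ J` of the form `1 + (nilpotent)`.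
  have hrJ : r - 1 ∈ J := by
    rw [← Ideal.Quotient.eq, map_one]
    refine (existsUnique_pow_eq_of_isNilpotent_sub_one hm (c := (1 : R ⧸ J)) (by simp)).unique
      ⟨by simpa using hr.map (Ideal.Quotient.mk J), ?_⟩ ⟨by simp, one_pow m⟩
    rw [← map_pow, hru, ← map_one (Ideal.Quotient.mk J)]
    exact Ideal.Quotient.eq.mpr hu
  have hr_unit : IsUnit r := by simpa using hr.isUnit_one_add
  refine ⟨Additive.ofMul hr_unit.unit, (ofMul_mem_ker_unitsLinearMap_mk_iff J _).mpr hrJ, ?_⟩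
  rw [← ofMul_pow]
  exact congrArg Additive.ofMul (Units.ext (by simpa using hru))

end Units

/-- `(steinbergRel R n).mkQ`, with codomain `MilnorK R n` so that its values carry the
instances of `MilnorK R n` rather than those of the bare quotient. -/
def milnorMk (R : Type*) [CommRing R] (n : ℕ) : MilnorPre R n →ₗ[ℤ] MilnorK R n :=
  (steinbergRel R n).mkQ

section Milnor

variable {R S : Type*} [CommRing R] [CommRing S] {f : R →+* S}

theorem steinbergRel_le_map (hf : Function.Surjective f) [IsLocalHom f] (n : ℕ) :
    steinbergRel S n ≤ (steinbergRel R n).map (milnorPreMap f n) := by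
  rw [steinbergRel, Submodule.span_le]
  rintro _ ⟨b, ⟨i, hi, hsum⟩, rfl⟩
  set i' : Fin n := ⟨i + 1, hi⟩
  choose a₀ ha₀ using
    fun j => IsLocalRing.surjective_units_map_of_local_ringHom f hf ‹_› (b j)
  have hfa₀ (j : Fin n) : f (a₀ j) = b j := congrArg Units.val (ha₀ j)
  have hw : f (1 - (a₀ i : R)) = b i' := by
    rw [map_sub, map_one, hfa₀, ← hsum, add_sub_cancel_left]
  have hw_unit : IsUnit (1 - (a₀ i : R)) := isUnit_of_map_unit f _ (hw ▸ (b i').isUnit)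
  set a := Function.update a₀ i' hw_unit.unit
  have hai : a i = a₀ i := Function.update_of_ne (fun h => by simp [i', Fin.ext_iff] at h) _ _
  have hai' : (a i' : R) = 1 - a₀ i := by
    rw [show a i' = hw_unit.unit from Function.update_self .., hw_unit.unit_spec]
  have hfa (j : Fin n) : Units.map (f : R →* S) (a j) = b j := by
    ext
    by_cases hj : j = i'
    · subst hj; simpa [hai'] using hw
    · simpa [a, Function.update_of_ne hj] using hfa₀ j
  refine ⟨_, Submodule.subset_span ⟨a, ⟨i, hi, ?_⟩, rfl⟩, ?_⟩
  · rw [hai', hai, add_sub_cancel]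
  · rw [milnorPreMap_eq_map_unitsLinearMap, PiTensorProduct.map_tprod]
    exact congrArg _ (funext fun j => congrArg Additive.ofMul (hfa j))

theorem ker_milnorMap_eq_map_ker (hf : Function.Surjective f) [IsLocalHom f] (n : ℕ) :
    LinearMap.ker (milnorMap f n) =
      (LinearMap.ker (milnorPreMap f n)).map (milnorMk R n) := by
  refine (Submodule.ker_mapQ _ _ _ _).trans <|
    le_antisymm ?_ (Submodule.map_mono (LinearMap.ker_le_comap _))
  calc ((steinbergRel S n).comap (milnorPreMap f n)).map (steinbergRel R n).mkQ
      ≤ (((steinbergRel R n).map (milnorPreMap f n)).comap (milnorPreMap f n)).map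
          (steinbergRel R n).mkQ :=
        Submodule.map_mono (Submodule.comap_mono (steinbergRel_le_map hf n))
    _ = (LinearMap.ker (milnorPreMap f n)).map (steinbergRel R n).mkQ := by
      rw [Submodule.comap_map_eq, Submodule.map_sup, Submodule.mkQ_map_self, bot_sup_eq]

end Milnor

theorem ker_milnorK_to_quotient_divisible_general
    (R : Type*) [CommRing R] [Algebra ℚ R] (J : Ideal R) (hJ : IsNilpotent J)
    (n : ℕ) :
    ∀ x ∈ LinearMap.ker (milnorMap (Ideal.Quotient.mk J) n),
      ∀ m : ℕ, 1 ≤ m →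
        ∃ y ∈ LinearMap.ker (milnorMap (Ideal.Quotient.mk J) n), m • y = x := by
  intro x hx m hm
  have : IsLocalHom (Ideal.Quotient.mk J) := isLocalHom_quotient_mk_of_isNilpotent hJ
  obtain ⟨σ, hσ⟩ := (unitsLinearMap (Ideal.Quotient.mk J)).exists_comp_eq_id_of_divisible_ker
    (unitsLinearMap_surjective Ideal.Quotient.mk_surjective)
    fun _ hk _ => exists_nsmul_eq_of_mem_ker_unitsLinearMap_mk hJ hk
  have hker : LinearMap.ker (milnorPreMap (Ideal.Quotient.mk J) n) =
      spanTprodWithFactorIn (LinearMap.ker (unitsLinearMap (Ideal.Quotient.mk J))) (Fin n) :=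
    ker_map_eq_spanTprodWithFactorIn hσ
  rw [ker_milnorMap_eq_map_ker Ideal.Quotient.mk_surjective, hker] at hx ⊢
  obtain ⟨x', hx', rfl⟩ := hx
  obtain ⟨y', hy', rfl⟩ := exists_nsmul_eq_of_mem_spanTprodWithFactorIn (m := m)
    (fun _ => exists_nsmul_eq_of_mem_ker_unitsLinearMap_mk hJ (by omega)) hx'
  exact ⟨_, Submodule.mem_map_of_mem hy', (map_nsmul _ m y').symm⟩

/-- Let `R` be a commutative `ℚ`-algebra, `J ⊆ R` a nilpotent ideal,
and `n ≥ 1`.  Then the kernel of `K_n^M(R) → K_n^M(R/J)` is a divisible abelian group: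
every element of the kernel is an `m`-th multiple of an element of the kernel, for every
`m ≥ 1`. -/
theorem ker_milnorK_to_quotient_divisible
    (R : Type*) [CommRing R] [Algebra ℚ R] (J : Ideal R) (hJ : IsNilpotent J)
    (n : ℕ) (hn : 0 < n) :
    ∀ x ∈ LinearMap.ker (milnorMap (Ideal.Quotient.mk J) n),
      ∀ m : ℕ, 1 ≤ m →
        ∃ y ∈ LinearMap.ker (milnorMap (Ideal.Quotient.mk J) n), m • y = x :=
  ker_milnorK_to_quotient_divisible_general R J hJ n

end
end

section
/- Let (C(r))_{r ∈ ℕ} be an inverse system of chain complexes of abelian groups indexed by the integers, with transition chain maps φ_{s,r} : C(s) → C(r) for s ≥ r. Assume: (a) in every degree d divisible by 3, all the transition maps φ_{s,r} in degree d are isomorphisms (the terms C(r)_d form a constant system); (b) in every degree d congruent to 1 modulo 3, the group C(r)_d is finite for every r; (c) for every degree d and every r ∈ ℕ there exists s ≥ r such that the induced map on homology H_d(C(s)) → H_d(C(r)) is the zero map. Then the chain complex lim_r C(r), obtained by taking inverse limits degreewise with the induced differentials, is exact, i.e. has vanishing homology in every degree. -/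
/-!
Lift the cycles `f r` to chains `y r` with `dif r (d + 1) (y r) = f r`, which pro-vanishing of
homology allows. The fibres of `dif r (d + 1)` over `f r` form an inverse system of torsors under
the cycle groups, and such a system has a compatible section once the cycles are Mittag-Leffler:
fibre images are then cosets of stable subgroups, so eventual images surject onto each other.
The cycles in degree `d + 2` are Mittag-Leffler because their images are eventually boundaries,
and boundaries either lift along the constant system in degree `d + 3` (`d ≡ 0 mod 3`) or lie
in a finite group (`d ≡ 1`); for `d ≡ 2` the cycle groups are finite themselves.
-/

open Set

section MittagLeffler

variable {F : ℕ → Type*} (f : ∀ ⦃i j : ℕ⦄, i ≤ j → F j → F i)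

def IsMittagLefflerOn (S : ∀ i, Set (F i)) : Prop :=
  ∀ i, ∃ j, ∃ hij : i ≤ j, ∀ k (hjk : j ≤ k), f hij '' S j ⊆ f (hij.trans hjk) '' S k

def IsSubsystem (S : ∀ i, Set (F i)) : Prop :=
  ∀ ⦃i j⦄ (h : i ≤ j), MapsTo (f h) (S j) (S i)

def eventualImage (S : ∀ i, Set (F i)) (i : ℕ) : Set (F i) :=
  {x | ∀ j (hij : i ≤ j), x ∈ f hij '' S j}

variable [InverseSystem f] {S : ∀ i, Set (F i)}

theorem map_eq_of_forall_map_succ_eq {x : ∀ i, F i}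
    (hx : ∀ i, f (Nat.le_succ i) (x (i + 1)) = x i) {i j : ℕ} (hij : i ≤ j) :
    f hij (x j) = x i := by
  induction j, hij using Nat.le_induction with
  | base => exact InverseSystem.map_self (f := f) _
  | succ j hij ih => rw [← InverseSystem.map_map (f := f) hij (Nat.le_succ j), hx, ih]

theorem eventualImage_subset {i : ℕ} : eventualImage f S i ⊆ S i := by
  rintro x hx
  obtain ⟨y, hy, rfl⟩ := hx i le_rfl
  rwa [InverseSystem.map_self (f := f)]

theorem image_subset_image_of_le (hS : IsSubsystem f S)
    {i j k : ℕ} (hij : i ≤ j) (hjk : j ≤ k) :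
    f (hij.trans hjk) '' S k ⊆ f hij '' S j := by
  rintro _ ⟨x, hx, rfl⟩
  exact ⟨f hjk x, hS hjk hx, InverseSystem.map_map (f := f) hij hjk x⟩

theorem image_subset_eventualImage (hS : IsSubsystem f S) {i j : ℕ} {hij : i ≤ j}
    (hj : ∀ k (hjk : j ≤ k), f hij '' S j ⊆ f (hij.trans hjk) '' S k) :
    f hij '' S j ⊆ eventualImage f S i := by
  intro x hx k hik
  rcases le_total j k with hjk | hkj
  · exact hj k hjk hx
  · exact image_subset_image_of_le f hS hik hkj hx

theorem exists_mem_eventualImage_succ (hS : IsSubsystem f S)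
    (hML : IsMittagLefflerOn f S) {i : ℕ} {x : F i} (hx : x ∈ eventualImage f S i) :
    ∃ y ∈ eventualImage f S (i + 1), f (Nat.le_succ i) y = x := by
  obtain ⟨j, hij, hj⟩ := hML (i + 1)
  obtain ⟨z, hz, rfl⟩ := hx j ((Nat.le_succ i).trans hij)
  exact ⟨f hij z, image_subset_eventualImage f hS hj ⟨z, hz, rfl⟩,
    InverseSystem.map_map (f := f) _ _ _⟩

theorem exists_compatible_of_isMittagLefflerOn
    (hS : IsSubsystem f S) (hne : ∀ i, (S i).Nonempty)
    (hML : IsMittagLefflerOn f S) :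
    ∃ x : ∀ i, F i, (∀ i, x i ∈ S i) ∧ ∀ ⦃i j⦄ (hij : i ≤ j), f hij (x j) = x i := by
  have hstart : (eventualImage f S 0).Nonempty := by
    obtain ⟨j, hij, hj⟩ := hML 0
    exact ((hne j).image _).mono (image_subset_eventualImage f hS hj)
  choose next hnext using fun i (x : eventualImage f S i) =>
    exists_mem_eventualImage_succ f hS hML x.2
  let x : ∀ i, eventualImage f S i :=
    fun i => Nat.rec ⟨_, hstart.some_mem⟩ (fun i xi => ⟨next i xi, (hnext i xi).1⟩) i
  exact ⟨fun i => (x i).1, fun i => eventualImage_subset f (x i).2,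
    fun i j hij => map_eq_of_forall_map_succ_eq f (x := fun i => (x i).1)
      (fun i => (hnext i (x i)).2) hij⟩

theorem isMittagLefflerOn_of_finite_image (hS : IsSubsystem f S)
    (hfin : ∀ i, ∃ j, ∃ hij : i ≤ j, (f hij '' S j).Finite) : IsMittagLefflerOn f S := by
  intro i
  obtain ⟨j₀, hij₀, hfin⟩ := hfin i
  let image (k : {k // j₀ ≤ k}) : Set (F i) := f (hij₀.trans k.2) '' S k
  have : Nonempty {k // j₀ ≤ k} := ⟨⟨j₀, le_rfl⟩⟩
  -- the images decrease with `k`, so one of least cardinality is contained in all later ones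
  set j := Function.argmin fun k => (image k).ncard
  refine ⟨j, hij₀.trans j.2, fun k hjk => ?_⟩
  have hsub := image_subset_image_of_le f hS (hij₀.trans j.2) hjk
  refine (eq_of_subset_of_ncard_le hsub ?_ ?_).ge
  · exact Function.argmin_le (fun k => (image k).ncard) ⟨k, j.2.trans hjk⟩
  · exact hfin.subset (image_subset_image_of_le f hS hij₀ j.2)

end MittagLeffler

section Fibres

variable {A B : ℕ → Type*} [∀ i, AddCommGroup (A i)] [∀ i, AddCommGroup (B i)]
  (fA : ∀ ⦃i j : ℕ⦄, i ≤ j → A j →+ A i) {fB : ∀ ⦃i j : ℕ⦄, i ≤ j → B j →+ B i}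
  {δ : ∀ i, A i →+ B i}

theorem isSubsystem_fibre (hδ : ∀ ⦃i j⦄ (h : i ≤ j) x, fB h (δ j x) = δ i (fA h x))
    {b : ∀ i, B i} (hb : ∀ ⦃i j⦄ (h : i ≤ j), fB h (b j) = b i) :
    IsSubsystem (fun _ _ h => fA h) fun i => δ i ⁻¹' {b i} := by
  intro i j h x hx
  simp only [mem_preimage, mem_singleton_iff] at hx ⊢
  rw [← hδ, hx, hb]

variable [InverseSystem fun _ _ h => fA h]

theorem isMittagLefflerOn_fibre (hδ : ∀ ⦃i j⦄ (h : i ≤ j) x, fB h (δ j x) = δ i (fA h x))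
    {b : ∀ i, B i} (hb : ∀ ⦃i j⦄ (h : i ≤ j), fB h (b j) = b i) (hne : ∀ i, ∃ x, δ i x = b i)
    (hK : IsMittagLefflerOn (fun _ _ h => fA h) fun i => δ i ⁻¹' {0}) :
    IsMittagLefflerOn (fun _ _ h => fA h) fun i => δ i ⁻¹' {b i} := by
  intro i
  obtain ⟨j, hij, hj⟩ := hK i
  refine ⟨j, hij, fun k hjk => ?_⟩
  rintro _ ⟨y, hy, rfl⟩
  obtain ⟨w, hw⟩ := hne k
  have hdiff : δ j (fA hjk w - y) = 0 := by
    rw [map_sub, ← hδ, hw, hb, (mem_singleton_iff.mp hy : δ j y = b j), sub_self]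
  obtain ⟨u, hu, hui⟩ := hj k hjk ⟨_, hdiff, rfl⟩
  refine ⟨w - u, ?_, ?_⟩
  · show δ k (w - u) = b k
    rw [map_sub, hw, (mem_singleton_iff.mp hu : δ k u = 0), sub_zero]
  · have hw' : fA hij (fA hjk w) = fA (hij.trans hjk) w :=
      InverseSystem.map_map (f := fun _ _ h => fA h) hij hjk w
    simp only [map_sub] at hui ⊢
    rw [hui, hw', sub_sub_cancel]

theorem exists_compatible_preimage_of_isMittagLefflerOn_ker
    (hδ : ∀ ⦃i j⦄ (h : i ≤ j) x, fB h (δ j x) = δ i (fA h x))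
    {b : ∀ i, B i} (hb : ∀ ⦃i j⦄ (h : i ≤ j), fB h (b j) = b i) (hne : ∀ i, ∃ x, δ i x = b i)
    (hK : IsMittagLefflerOn (fun _ _ h => fA h) fun i => δ i ⁻¹' {0}) :
    ∃ a : ∀ i, A i, (∀ i, δ i (a i) = b i) ∧ ∀ ⦃i j⦄ (h : i ≤ j), fA h (a j) = a i :=
  exists_compatible_of_isMittagLefflerOn _ (isSubsystem_fibre fA hδ hb) hne
    (isMittagLefflerOn_fibre fA hδ hb hne hK)

end Fibres

section ChainComplexes

variable {A : ℕ → ℤ → Type*} [∀ r d, AddCommGroup (A r d)]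
  (dif : ∀ (r : ℕ) (d : ℤ), A r (d + 1) →+ A r d) (φ : ∀ s r : ℕ, r ≤ s → ∀ d : ℤ, A s d →+ A r d)

/-- Every map `H_{n+1}(C s) → H_{n+1}(C r)` with `s ≥ r` large enough vanishes. -/
def IsProZeroHomology (n : ℤ) : Prop :=
  ∀ r, ∃ s, ∃ h : r ≤ s, ∀ x : A s (n + 1), dif s n x = 0 →
    ∃ y : A r (n + 1 + 1), dif r (n + 1) y = φ s r h (n + 1) x

variable {dif φ} {n : ℤ}

theorem isMittagLefflerOn_cycles_of_surjective
    (hdd : ∀ r, (dif r n).comp (dif r (n + 1)) = 0)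
    (hchain : ∀ (s r : ℕ) (h : r ≤ s) (x : A s (n + 1 + 1)),
      φ s r h (n + 1) (dif s (n + 1) x) = dif r (n + 1) (φ s r h (n + 1 + 1) x))
    (hH : IsProZeroHomology dif φ n)
    (hsurj : ∀ (s r : ℕ) (h : r ≤ s), Function.Surjective (φ s r h (n + 1 + 1))) :
    IsMittagLefflerOn (fun i j h => φ j i h (n + 1)) fun r => dif r n ⁻¹' {0} := by
  intro i
  obtain ⟨j, hij, hj⟩ := hH i
  refine ⟨j, hij, fun k hjk => ?_⟩
  rintro _ ⟨x, hx, rfl⟩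
  obtain ⟨y, hy⟩ := hj x hx
  obtain ⟨z, rfl⟩ := hsurj k i (hij.trans hjk) y
  exact ⟨dif k (n + 1) z, DFunLike.congr_fun (hdd k) z, (hchain k i _ z).trans hy⟩

theorem isMittagLefflerOn_cycles_of_finite
    [InverseSystem fun i j h => φ j i h (n + 1)]
    (hchain : ∀ (s r : ℕ) (h : r ≤ s) (x : A s (n + 1)),
      φ s r h n (dif s n x) = dif r n (φ s r h (n + 1) x))
    (hH : IsProZeroHomology dif φ n) (hfin : ∀ r, Finite (A r (n + 1 + 1))) :
    IsMittagLefflerOn (fun i j h => φ j i h (n + 1)) fun r => dif r n ⁻¹' {0} := by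
  refine isMittagLefflerOn_of_finite_image _
    (isSubsystem_fibre _ (fB := fun i j h => φ j i h n) (fun _ _ h => hchain _ _ h)
      fun _ _ _ => map_zero _)
    fun i => ?_
  obtain ⟨j, hij, hj⟩ := hH i
  refine ⟨j, hij, (finite_range (dif i (n + 1))).subset ?_⟩
  rintro _ ⟨x, hx, rfl⟩
  exact hj x hx

end ChainComplexes

/-- Let `(C(r))_{r ∈ ℕ}` be an inverse system of `ℤ`-indexed chain
complexes of abelian groups (with degree-`(d+1)`-to-degree-`d` differentials `dif r d`
and transition chain maps `φ s r`).  Assume: (a) in every degree divisible by 3 the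
transition maps are isomorphisms; (b) in every degree `≡ 1 (mod 3)` all the groups are
finite; (c) for every degree and every `r` there is `s ≥ r` such that the induced map on
homology `H_d(C(s)) → H_d(C(r))` is zero (every cycle of `C(s)` maps to a boundary of
`C(r)`).  Then the degreewise inverse limit complex is exact: every compatible family of
cycles is the boundary of a compatible family. -/
theorem limit_complex_exact_of_pro_zero_homology
    (A : ℕ → ℤ → Type*) [∀ r d, AddCommGroup (A r d)]
    (dif : ∀ (r : ℕ) (d : ℤ), A r (d + 1) →+ A r d)
    (hdd : ∀ (r : ℕ) (d : ℤ), (dif r d).comp (dif r (d + 1)) = 0)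
    (φ : ∀ s r : ℕ, r ≤ s → ∀ d : ℤ, A s d →+ A r d)
    (hid : ∀ (r : ℕ) (d : ℤ) (x : A r d), φ r r le_rfl d x = x)
    (hcomp : ∀ (t s r : ℕ) (hts : s ≤ t) (hsr : r ≤ s) (d : ℤ) (x : A t d),
      φ s r hsr d (φ t s hts d x) = φ t r (hsr.trans hts) d x)
    (hchain : ∀ (s r : ℕ) (h : r ≤ s) (d : ℤ) (x : A s (d + 1)),
      φ s r h d (dif s d x) = dif r d (φ s r h (d + 1) x))
    (ha : ∀ (s r : ℕ) (h : r ≤ s) (d : ℤ), (3 : ℤ) ∣ d → Function.Bijective (φ s r h d))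
    (hb : ∀ (r : ℕ) (d : ℤ), d % 3 = 1 → Finite (A r d))
    (hc : ∀ (d : ℤ) (r : ℕ), ∃ s : ℕ, ∃ h : r ≤ s,
      ∀ x : A s (d + 1), dif s d x = 0 →
        ∃ y : A r (d + 1 + 1), dif r (d + 1) y = φ s r h (d + 1) x) :
    ∀ (d : ℤ) (f : ∀ r : ℕ, A r (d + 1)),
      (∀ (s r : ℕ) (h : r ≤ s), φ s r h (d + 1) (f s) = f r) →
      (∀ r : ℕ, dif r d (f r) = 0) →
      ∃ g : ∀ r : ℕ, A r (d + 1 + 1),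
        (∀ (s r : ℕ) (h : r ≤ s), φ s r h (d + 1 + 1) (g s) = g r) ∧
        ∀ r : ℕ, dif r (d + 1) (g r) = f r := by
  intro d f hf hz
  have : ∀ n, InverseSystem fun i j h => φ j i h n := fun n =>
    ⟨fun i x => hid i n x, fun k j i hkj hji x => hcomp i j k hji hkj n x⟩
  have hcycles : IsMittagLefflerOn (fun i j h => φ j i h (d + 1 + 1))
      fun r => dif r (d + 1) ⁻¹' {0} := by
    rcases (by omega : d % 3 = 0 ∨ d % 3 = 1 ∨ d % 3 = 2) with h3 | h3 | h3
    · exact isMittagLefflerOn_cycles_of_surjective (fun r => hdd r _) (fun s r h => hchain s r h _)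
        (hc _) fun s r h => (ha s r h _ (by omega)).2
    · exact isMittagLefflerOn_cycles_of_finite (fun s r h => hchain s r h _) (hc _)
        fun r => hb r _ (by omega)
    · have : ∀ r, Finite (A r (d + 1 + 1)) := fun r => hb r _ (by omega)
      exact isMittagLefflerOn_of_finite_image _
        (isSubsystem_fibre _ (fun j i h => hchain i j h _) fun _ _ _ => map_zero _)
        fun i => ⟨i, le_rfl, toFinite _⟩
  have hboundary : ∀ r, ∃ y, dif r (d + 1) y = f r := fun r => by
    obtain ⟨s, h, hs⟩ := hc d r
    obtain ⟨y, hy⟩ := hs (f s) (hz s)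
    exact ⟨y, hy.trans (hf s r h)⟩
  obtain ⟨g, hg, hcompat⟩ := exists_compatible_preimage_of_isMittagLefflerOn_ker _
    (fun j i h => hchain i j h _) (fun j i h => hf i j h) hboundary hcycles
  exact ⟨g, fun s r h => hcompat h, hg⟩
end

section
/- Let G be an abelian group whose torsion subgroup T = {g ∈ G : n·g = 0 for some integer n ≥ 1} has finite exponent, i.e. there exists an integer m ≥ 1 with m·t = 0 for all t ∈ T. Then T is a direct summand of G: there exists a subgroup H ≤ G with T ∩ H = 0 and T + H = G. -/
/-!
Induction on the exponent, one prime at a time. If `p` is prime and `T` meets `pG` trivially,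
then `T` embeds into the `𝔽_p`-vector space `G/pG`, and the preimage of a linear complement of
its image is a complement of `T`; this applies to the torsion subgroup once `p` kills it, since
`p • g` torsion forces `g` torsion. For exponent `p * a`, the torsion of `G/G[p]` is the image of
the torsion of `G` and is killed by `a`. Pulling back a complement there gives `H` with
`T + H = G` and `T ∩ H ≤ G[p]`, and a complement in `H` of the torsion of `H`, which `p` kills,
is a complement of `T` in `G`.
-/

open AddCommGroup

namespace AddSubgroup

variable {G Q : Type*} [AddGroup G] [AddGroup Q]

theorem codisjoint_comap_of_codisjoint_map {f : G →+ Q} (hf : Function.Surjective f)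
    {T : AddSubgroup G} {C : AddSubgroup Q} (h : Codisjoint (T.map f) C) :
    Codisjoint T (C.comap f) := by
  rw [codisjoint_iff] at h ⊢
  calc T ⊔ C.comap f = T ⊔ f.ker ⊔ C.comap f := by
        rw [sup_assoc, sup_eq_right.2 (f.ker_le_comap C)]
    _ = (T.map f ⊔ C).comap f := by rw [← comap_map_eq, comap_sup_eq _ _ _ hf]
    _ = ⊤ := by rw [h, comap_top]

theorem inf_comap_le_ker_of_disjoint_map {f : G →+ Q} {T : AddSubgroup G} {C : AddSubgroup Q}
    (h : Disjoint (T.map f) C) : T ⊓ C.comap f ≤ f.ker :=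
  calc T ⊓ C.comap f ≤ (T.map f).comap f ⊓ C.comap f := inf_le_inf_right _ (le_comap_map f T)
    _ = f.ker := by rw [← comap_inf, h.eq_bot, f.comap_bot]

theorem isCompl_map_subtype {T H : AddSubgroup G} {K : AddSubgroup H} (hTH : Codisjoint T H)
    (hK : IsCompl (T.addSubgroupOf H) K) : IsCompl T (K.map H.subtype) := by
  refine ⟨disjoint_iff_inf_le.2 ?_, codisjoint_iff.2 ?_⟩
  · rintro _ ⟨hT, k, hk, rfl⟩
    have : k = 0 := hK.disjoint.le_bot ⟨hT, hk⟩
    simp [this]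
  · rw [← hTH.eq_top]
    calc T ⊔ K.map H.subtype = T ⊔ (T.addSubgroupOf H ⊔ K).map H.subtype := by
          rw [map_sup, addSubgroupOf_map_subtype, ← sup_assoc, sup_inf_self]
      _ = T ⊔ H := by rw [hK.sup_eq_top, ← AddMonoidHom.range_eq_map, range_subtype]

end AddSubgroup

theorem AddSubgroup.exists_isCompl_of_disjoint_range_nsmul {G : Type*} [AddCommGroup G] {p : ℕ}
    [Fact p.Prime] {T : AddSubgroup G} (hT : Disjoint T (nsmulAddMonoidHom p : G →+ G).range) :
    ∃ H : AddSubgroup G, IsCompl T H := by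
  set pG := (nsmulAddMonoidHom p : G →+ G).range
  let _ : Module (ZMod p) (G ⧸ pG) := QuotientAddGroup.zmodModule fun g => ⟨g, rfl⟩
  obtain ⟨C, hC⟩ := (toZModSubmodule p (T.map (QuotientAddGroup.mk' pG))).exists_isCompl
  replace hC : IsCompl (T.map (QuotientAddGroup.mk' pG)) C.toAddSubgroup :=
    (toZModSubmodule p).isCompl_iff.2 hC
  refine ⟨C.toAddSubgroup.comap (QuotientAddGroup.mk' pG), disjoint_iff_inf_le.2 ?_,
    codisjoint_comap_of_codisjoint_map (QuotientAddGroup.mk'_surjective _) hC.codisjoint⟩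
  have := inf_comap_le_ker_of_disjoint_map hC.disjoint
  rw [QuotientAddGroup.ker_mk'] at this
  exact (le_inf inf_le_left this).trans hT.le_bot

namespace AddCommGroup

variable {G : Type*} [AddCommGroup G]

theorem exists_isCompl_torsion_of_prime {p : ℕ} (hp : p.Prime)
    (h : ∀ t ∈ torsion G, p • t = 0) :
    ∃ H : AddSubgroup G, IsCompl (torsion G) H := by
  have := Fact.mk hp
  refine AddSubgroup.exists_isCompl_of_disjoint_range_nsmul (p := p) (disjoint_iff_inf_le.2 ?_)
  rintro _ ⟨ht, g, rfl⟩
  exact h g ((ht : IsOfFinAddOrder (p • g)).of_nsmul hp.ne_zero)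

theorem map_torsion_mk' {N : AddSubgroup G} (hN : N ≤ torsion G) :
    (torsion G).map (QuotientAddGroup.mk' N) = torsion (G ⧸ N) := by
  refine le_antisymm (map_torsion_le _) fun x hx => ?_
  induction x using QuotientAddGroup.induction_on with | H g => ?_
  obtain ⟨n, hn, hng⟩ := isOfFinAddOrder_iff_nsmul_eq_zero.1 hx
  have : n • g ∈ N := (QuotientAddGroup.eq_zero_iff _).1 (by simpa using hng)
  exact ⟨g, (hN this).of_nsmul hn.ne', rfl⟩

theorem exists_isCompl_torsion {m : ℕ} (hm : m ≠ 0)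
    (h : ∀ t ∈ torsion G, m • t = 0) : ∃ H : AddSubgroup G, IsCompl (torsion G) H := by
  induction m using induction_on_primes generalizing G with
  | zero => exact absurd rfl hm
  | one =>
    refine ⟨⊤, ?_⟩
    have : torsion G = ⊥ := (AddSubgroup.eq_bot_iff_forall _).2 fun t ht => by simpa using h t ht
    exact this ▸ isCompl_bot_top
  | prime_mul p a hp ih =>
    set N := (nsmulAddMonoidHom p : G →+ G).ker
    have hN : N ≤ torsion G := fun g hg => isOfFinAddOrder_iff_nsmul_eq_zero.2 ⟨p, hp.pos, hg⟩
    have hQ : ∀ x ∈ torsion (G ⧸ N), a • x = 0 := by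
      rw [← map_torsion_mk' hN]
      rintro _ ⟨t, ht, rfl⟩
      rw [← map_nsmul, QuotientAddGroup.mk'_apply, QuotientAddGroup.eq_zero_iff]
      show p • a • t = 0
      rw [← mul_nsmul', h t ht]
    obtain ⟨C, hC⟩ := ih (right_ne_zero_of_mul hm) (G := G ⧸ N) hQ
    rw [← map_torsion_mk' hN] at hC
    set H := C.comap (QuotientAddGroup.mk' N)
    have hTH : Codisjoint (torsion G) H := AddSubgroup.codisjoint_comap_of_codisjoint_map
      (QuotientAddGroup.mk'_surjective N) hC.codisjoint
    have hH_torsion : ∀ t ∈ torsion H, p • t = 0 := by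
      intro t ht
      rw [← comap_torsion_of_injective H.subtype_injective] at ht
      have := AddSubgroup.inf_comap_le_ker_of_disjoint_map hC.disjoint ⟨ht, t.2⟩
      rw [QuotientAddGroup.ker_mk'] at this
      exact Subtype.ext this
    obtain ⟨K, hK⟩ := exists_isCompl_torsion_of_prime hp hH_torsion
    rw [← comap_torsion_of_injective H.subtype_injective] at hK
    exact ⟨K.map H.subtype, AddSubgroup.isCompl_map_subtype hTH hK⟩

end AddCommGroup

/-- Let `G` be an abelian group whose torsion subgroup `T` has finite
exponent, i.e. there exists `m ≥ 1` with `m • t = 0` for all `t ∈ T`.  Then `T` is a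
direct summand of `G`: there is a subgroup `H ≤ G` with `T ⊓ H = ⊥` and `T ⊔ H = ⊤`. -/
theorem torsion_subgroup_direct_summand_of_finite_exponent
    (G : Type*) [AddCommGroup G]
    (T : AddSubgroup G) (hT : ∀ g : G, g ∈ T ↔ ∃ n : ℕ, 1 ≤ n ∧ n • g = 0)
    (m : ℕ) (hm : 1 ≤ m) (hexp : ∀ t ∈ T, m • t = 0) :
    ∃ H : AddSubgroup G, T ⊓ H = ⊥ ∧ T ⊔ H = ⊤ := by
  obtain rfl : T = torsion G :=
    AddSubgroup.ext fun g => (hT g).trans isOfFinAddOrder_iff_nsmul_eq_zero.symm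
  obtain ⟨H, hH⟩ := exists_isCompl_torsion (Nat.one_le_iff_ne_zero.1 hm) hexp
  exact ⟨H, hH.inf_eq_bot, hH.sup_eq_top⟩
end

section
/- Let 0 → B → C → D → 0 be a short exact sequence of abelian groups, i.e. there are group homomorphisms ι : B → C and π : C → D with ι injective, π surjective, and ker π = im ι. Suppose B is finite and D is divisible. Then there exist subgroups M and F of C such that C is the internal direct sum of M and F (M ∩ F = 0 and M + F = C), M is divisible, F is finite, and F is isomorphic to a quotient group of B. -/
/-!
Let `n = |B|`. Pulling divisibility of `D` back along `π` shows that every element of `C` is of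
the form `m • c + ι b`; multiplying by `n` kills the `B`-part, so `M = n • C` is divisible, and
taking `m = n` gives `M + ι(B) = C`. A divisible group is injective, so `M` is a retract of `C`,
and the kernel `F` of the retraction is a complement of `M`. The projection onto `F` along `M`
restricts to a surjection `B → F`.
-/

section Retraction

variable {C : Type*} [AddCommGroup C] {M : AddSubgroup C}

theorem AddSubgroup.exists_retraction_of_divisible
    (hM : ∀ x ∈ M, ∀ m : ℕ, 1 ≤ m → ∃ y ∈ M, m • y = x) :
    ∃ r : C →+ M, ∀ x : M, r x = x := by
  have : DivisibleBy M ℕ := divisibleByOfSMulRightSurj M ℕ fun {m} hm ⟨x, hx⟩ ↦ by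
    obtain ⟨y, hy, hyx⟩ := hM x hx m (Nat.one_le_iff_ne_zero.mpr hm)
    exact ⟨⟨y, hy⟩, Subtype.ext hyx⟩
  have : DivisibleBy M ℤ := AddGroup.divisibleByIntOfDivisibleByNat M
  obtain ⟨r, hr⟩ := (Module.Baer.of_divisible M).extension_property_addMonoidHom
    M.subtype M.subtype_injective (AddMonoidHom.id M)
  exact ⟨r, DFunLike.congr_fun hr⟩

variable (r : C →+ M) (hr : ∀ x : M, r x = x)
include hr

theorem AddSubgroup.isCompl_ker_of_retraction : IsCompl M r.ker := by
  constructor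
  · refine disjoint_iff_inf_le.mpr fun x ⟨hxM, hxr⟩ ↦ ?_
    have hx : (⟨x, hxM⟩ : M) = 0 := (hr ⟨x, hxM⟩).symm.trans hxr
    exact congrArg Subtype.val hx
  · refine codisjoint_iff_le_sup.mpr fun c _ ↦ ?_
    have hc : c - r c ∈ r.ker := by simp [AddMonoidHom.mem_ker, hr]
    simpa using AddSubgroup.add_mem_sup (r c).2 hc

def AddSubgroup.projKerOfRetraction : C →+ r.ker :=
  (AddMonoidHom.id C - M.subtype.comp r).codRestrict r.ker fun c ↦ by
    simp [AddMonoidHom.mem_ker, hr]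

theorem AddSubgroup.projKerOfRetraction_surjective :
    Function.Surjective (M.projKerOfRetraction r hr) := fun ⟨x, hx⟩ ↦
  ⟨x, Subtype.ext <| by simp [projKerOfRetraction, AddMonoidHom.mem_ker.mp hx]⟩

theorem AddSubgroup.le_ker_projKerOfRetraction : M ≤ (M.projKerOfRetraction r hr).ker :=
  fun x hx ↦ Subtype.ext <| by simp [projKerOfRetraction, hr ⟨x, hx⟩]

end Retraction

theorem AddMonoidHom.surjective_comp_of_sup_range_eq_top {B C X : Type*} [AddCommGroup B]
    [AddCommGroup C] [AddCommGroup X] {M : AddSubgroup C} {ι : B →+ C} {p : C →+ X}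
    (hp : Function.Surjective p) (hM : M ≤ p.ker) (hsup : M ⊔ ι.range = ⊤) :
    Function.Surjective (p.comp ι) := by
  intro x
  obtain ⟨c, rfl⟩ := hp x
  obtain ⟨m, hm, _, ⟨b, rfl⟩, rfl⟩ := AddSubgroup.mem_sup.mp (hsup ▸ AddSubgroup.mem_top c)
  exact ⟨b, by simp [AddMonoidHom.mem_ker.mp (hM hm)]⟩

section Exact

variable {B C D : Type*} [AddCommGroup B] [AddCommGroup C] [AddCommGroup D]
  {ι : B →+ C} {π : C →+ D}

theorem exists_eq_nsmul_add_of_divisible_of_exact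
    (hdiv : ∀ d : D, ∀ m : ℕ, 1 ≤ m → ∃ e : D, m • e = d)
    (hπ : Function.Surjective π) (hexact : π.ker ≤ ι.range) (c : C) {m : ℕ} (hm : 1 ≤ m) :
    ∃ c' : C, ∃ b : B, m • c' + ι b = c := by
  obtain ⟨e, he⟩ := hdiv (π c) m hm
  obtain ⟨c', rfl⟩ := hπ e
  obtain ⟨b, hb⟩ := hexact (show c - m • c' ∈ π.ker by simp [AddMonoidHom.mem_ker, he])
  exact ⟨c', b, by rw [hb]; abel⟩

variable {n : ℕ} (hnB : ∀ b : B, n • b = 0)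
  (hdiv : ∀ d : D, ∀ m : ℕ, 1 ≤ m → ∃ e : D, m • e = d)
  (hπ : Function.Surjective π) (hexact : π.ker ≤ ι.range)
include hdiv hπ hexact

theorem nsmul_range_sup_range_eq_top (hn : 1 ≤ n) :
    (n • AddMonoidHom.id C).range ⊔ ι.range = ⊤ := by
  refine eq_top_iff.mpr fun c _ ↦ ?_
  obtain ⟨c', b, rfl⟩ := exists_eq_nsmul_add_of_divisible_of_exact hdiv hπ hexact c hn
  exact AddSubgroup.add_mem_sup ⟨c', rfl⟩ ⟨b, rfl⟩

include hnB in
theorem divisible_nsmul_range_of_nsmul_eq_zero (x : C) (hx : x ∈ (n • AddMonoidHom.id C).range)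
    (m : ℕ) (hm : 1 ≤ m) : ∃ y ∈ (n • AddMonoidHom.id C).range, m • y = x := by
  obtain ⟨c, rfl⟩ := hx
  obtain ⟨c', b, rfl⟩ := exists_eq_nsmul_add_of_divisible_of_exact hdiv hπ hexact c hm
  refine ⟨n • c', ⟨c', rfl⟩, ?_⟩
  simp [← map_nsmul, hnB, smul_comm m n]

end Exact

theorem exact_seq_finite_divisible_splits_general
    (B C D : Type*) [AddCommGroup B] [AddCommGroup C] [AddCommGroup D]
    [Finite B]
    (hdiv : ∀ d : D, ∀ m : ℕ, 1 ≤ m → ∃ e : D, m • e = d)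
    (ι : B →+ C) (π : C →+ D)
    (hπ : Function.Surjective π)
    (hexact : π.ker = ι.range) :
    ∃ M F : AddSubgroup C,
      M ⊓ F = ⊥ ∧ M ⊔ F = ⊤ ∧
      (∀ x ∈ M, ∀ m : ℕ, 1 ≤ m → ∃ y ∈ M, m • y = x) ∧
      Finite F ∧
      ∃ K : AddSubgroup B, Nonempty ((B ⧸ K) ≃+ F) := by
  set n := Nat.card B
  set M := (n • AddMonoidHom.id C).range
  have hMdiv : ∀ x ∈ M, ∀ m : ℕ, 1 ≤ m → ∃ y ∈ M, m • y = x :=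
    divisible_nsmul_range_of_nsmul_eq_zero (fun _ ↦ card_nsmul_eq_zero') hdiv hπ hexact.le
  have hsup : M ⊔ ι.range = ⊤ := nsmul_range_sup_range_eq_top hdiv hπ hexact.le Nat.card_pos
  obtain ⟨r, hr⟩ := M.exists_retraction_of_divisible hMdiv
  have hcompl := M.isCompl_ker_of_retraction r hr
  have hsurj := AddMonoidHom.surjective_comp_of_sup_range_eq_top
    (M.projKerOfRetraction_surjective r hr) (M.le_ker_projKerOfRetraction r hr) hsup
  let e := QuotientAddGroup.quotientKerEquivOfSurjective _ hsurj
  exact ⟨M, r.ker, hcompl.inf_eq_bot, hcompl.sup_eq_top, hMdiv, .of_equiv _ e.toEquiv, _, ⟨e⟩⟩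

/-- Let `0 → B → C → D → 0` be a short exact sequence of abelian groups
with `B` finite and `D` divisible.  Then `C` is the internal direct sum of a divisible
subgroup `M` and a finite subgroup `F`, where `F` is isomorphic to a quotient group of
`B`. -/
theorem exact_seq_finite_divisible_splits
    (B C D : Type*) [AddCommGroup B] [AddCommGroup C] [AddCommGroup D]
    [Finite B]
    (hdiv : ∀ d : D, ∀ m : ℕ, 1 ≤ m → ∃ e : D, m • e = d)
    (ι : B →+ C) (π : C →+ D)
    (hι : Function.Injective ι) (hπ : Function.Surjective π)
    (hexact : π.ker = ι.range) :
    ∃ M F : AddSubgroup C,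
      M ⊓ F = ⊥ ∧ M ⊔ F = ⊤ ∧
      (∀ x ∈ M, ∀ m : ℕ, 1 ≤ m → ∃ y ∈ M, m • y = x) ∧
      Finite F ∧
      ∃ K : AddSubgroup B, Nonempty ((B ⧸ K) ≃+ F) :=
  exact_seq_finite_divisible_splits_general B C D hdiv ι π hπ hexact
end

section
/- Let A be a commutative, Noetherian, reduced ring of Krull dimension one whose normalization Ã is finite as an A-module. Then the conductor ideal 𝔣 := {a ∈ A : a·x lies in the image of A for every x ∈ Ã} contains a non-zero-divisor of A, and the quotient ring A/𝔣 is Artinian. -/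
/-!
Writing the normalization as a finitely generated submodule of the total ring of fractions,
clearing the denominators of finitely many generators gives a single non-zero-divisor in the
conductor. A non-zero-divisor lies in no minimal prime, so killing it drops the Krull dimension
by one; hence `A/𝔣` is a Noetherian ring of dimension zero, i.e. Artinian.
-/

/-- The conductor ideal of a commutative reduced ring `A` in its normalization (the
integral closure of `A` in its total ring of fractions): it consists of the `a ∈ A` such
that multiplication by `a` carries the whole normalization into the image of `A`. -/
def normalizationConductor (A : Type*) [CommRing A] : Ideal A where
  carrier := {a : A | ∀ x : integralClosure A (FractionRing A),
    a • (x : FractionRing A) ∈ Set.range (algebraMap A (FractionRing A))}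
  zero_mem' := fun x => ⟨0, by simp⟩
  add_mem' := by
    rintro a b ha hb x
    obtain ⟨u, hu⟩ := ha x
    obtain ⟨v, hv⟩ := hb x
    exact ⟨u + v, by rw [map_add, hu, hv, add_smul]⟩
  smul_mem' := by
    rintro c a ha x
    obtain ⟨u, hu⟩ := ha x
    refine ⟨c * u, ?_⟩
    rw [smul_eq_mul, mul_smul, ← hu, map_mul, ← Algebra.smul_def]

theorem exists_nonZeroDivisor_mem_normalizationConductor (A : Type*) [CommRing A]
    [Module.Finite A (integralClosure A (FractionRing A))] :
    ∃ a ∈ normalizationConductor A, a ∈ nonZeroDivisors A := by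
  have hfg : (integralClosure A (FractionRing A)).toSubmodule.FG :=
    Module.Finite.iff_fg.mp ‹_›
  obtain ⟨a, ha, hint⟩ := FractionalIdeal.isFractional_of_fg (S := nonZeroDivisors A) hfg
  exact ⟨a, fun x ↦ hint x x.2, ha⟩

theorem isArtinianRing_quotient_of_nonZeroDivisor_mem {R : Type*} [CommRing R]
    [IsNoetherianRing R] (hdim : ringKrullDim R ≤ 1) {I : Ideal R} {r : R}
    (hrI : r ∈ I) (hr : r ∈ nonZeroDivisors R) : IsArtinianRing (R ⧸ I) := by
  have hle : ringKrullDim (R ⧸ I) + 1 ≤ 1 :=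
    (ringKrullDim_succ_le_of_surjective _ Ideal.Quotient.mk_surjective hr
      (Ideal.Quotient.eq_zero_iff_mem.mpr hrI)).trans hdim
  have : Ring.KrullDimLE 0 (R ⧸ I) := by
    rw [Ring.krullDimLE_iff]
    exact ENat.WithBot.add_le_add_natCast_right_iff.mp hle
  exact IsNoetherianRing.isArtinianRing_of_krullDimLE_zero

theorem conductor_contains_nonZeroDivisor_and_quotient_isArtinian_general
    (A : Type*) [CommRing A] [IsNoetherianRing A]
    (hdim : ringKrullDim A = 1)
    [Module.Finite A (integralClosure A (FractionRing A))] :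
    (∃ a ∈ normalizationConductor A, a ∈ nonZeroDivisors A) ∧
    IsArtinianRing (A ⧸ normalizationConductor A) := by
  obtain ⟨a, ha, hnzd⟩ := exists_nonZeroDivisor_mem_normalizationConductor A
  exact ⟨⟨a, ha, hnzd⟩, isArtinianRing_quotient_of_nonZeroDivisor_mem hdim.le ha hnzd⟩

/-- Let `A` be a commutative, Noetherian, reduced ring of Krull
dimension one whose normalization is finite as an `A`-module.  Then the conductor ideal
contains a non-zero-divisor of `A` and the quotient `A/𝔣` is Artinian. -/
theorem conductor_contains_nonZeroDivisor_and_quotient_isArtinian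
    (A : Type*) [CommRing A] [IsNoetherianRing A] [IsReduced A]
    (hdim : ringKrullDim A = 1)
    [Module.Finite A (integralClosure A (FractionRing A))] :
    (∃ a ∈ normalizationConductor A, a ∈ nonZeroDivisors A) ∧
    IsArtinianRing (A ⧸ normalizationConductor A) :=
  conductor_contains_nonZeroDivisor_and_quotient_isArtinian_general A hdim
end

section
/- Let A be a commutative, Noetherian, reduced ring of Krull dimension one with normalization B = Ã. Suppose there exists an ideal I of B which, under the inclusion A ⊆ B, is contained in A, and which is not contained in any minimal prime ideal of B. Then B is a finitely generated A-module. -/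
/-!
Prime avoidance turns the ideal `I ∩ A`, which lies in no minimal prime of `A` (minimal
primes of `A` are contractions of minimal primes of `B`), into a non-zero-divisor `d ∈ I ∩ A`:
in a reduced ring the zero divisors lie in the union of the minimal primes. Then
`d • B ⊆ I ⊆ A`, so `B` is a fractional ideal and embeds into the Noetherian module `A` via
multiplication by `d`.
-/

open nonZeroDivisors

theorem mem_nonZeroDivisors_of_forall_notMem_minimalPrimes {R : Type*} [CommRing R]
    [IsReduced R] {x : R} (hx : ∀ p ∈ minimalPrimes R, x ∉ p) : x ∈ R⁰ := by
  refine mem_nonZeroDivisors_iff_right.mpr fun z hzx => ?_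
  have hz : z ∈ sInf (minimalPrimes R) := Ideal.mem_sInf.mpr fun p hp =>
    (hp.isPrime.mem_or_mem (hzx ▸ p.zero_mem)).resolve_right (hx p hp)
  rw [Ideal.sInf_minimalPrimes] at hz
  obtain ⟨n, hn⟩ := hz
  exact IsNilpotent.eq_zero ⟨n, hn⟩

theorem Ideal.exists_mem_nonZeroDivisors_of_forall_not_le_minimalPrimes {R : Type*}
    [CommRing R] [IsReduced R] (hfin : (minimalPrimes R).Finite) {J : Ideal R}
    (hJ : ∀ p ∈ minimalPrimes R, ¬ J ≤ p) : ∃ x ∈ J, x ∈ R⁰ := by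
  have hJ' : ¬ (J : Set R) ⊆ ⋃ p ∈ minimalPrimes R, ((id p : Ideal R) : Set R) := by
    rw [Ideal.subset_union_prime_finite (f := id) hfin ⊥ ⊥ fun p hp _ _ => hp.isPrime]
    simpa using hJ
  obtain ⟨x, hxJ, hx⟩ := Set.not_subset.mp hJ'
  simp only [id, Set.mem_iUnion, SetLike.mem_coe, not_exists] at hx
  exact ⟨x, hxJ, mem_nonZeroDivisors_of_forall_notMem_minimalPrimes hx⟩

theorem Ideal.comap_not_le_of_mem_minimalPrimes {R S : Type*} [CommRing R] [CommRing S]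
    {f : R →+* S} (hf : Function.Injective f) {I : Ideal S} (hI : ∀ x ∈ I, x ∈ f.range)
    (hmin : ∀ P ∈ minimalPrimes S, ¬ I ≤ P) {p : Ideal R} (hp : p ∈ minimalPrimes R) :
    ¬ I.comap f ≤ p := by
  intro hle
  obtain ⟨Q, hQ, rfl⟩ := Ideal.exists_minimalPrimes_comap_eq f p
    (by rwa [Ideal.comap_bot_of_injective f hf])
  refine hmin Q hQ fun x hx => ?_
  obtain ⟨a, rfl⟩ := hI x hx
  exact hle hx

theorem IsFractional.fg {R P : Type*} [CommRing R] [CommRing P] [Algebra R P]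
    [IsNoetherianRing R] {S : Submonoid R} [IsLocalization S P] {M : Submodule R P}
    (hM : IsFractional S M) : M.FG := by
  obtain ⟨a, ha, hint⟩ := hM
  have hreg : IsSMulRegular P a :=
    (isSMulRegular_algebraMap_iff P).mp ((IsLocalization.map_units P ⟨a, ha⟩).isSMulRegular P)
  have hone : (1 : Submodule R P).FG := by
    rw [Submodule.one_eq_span]
    exact Submodule.fg_span_singleton 1
  refine Submodule.fg_of_fg_map_injective (LinearMap.lsmul R P a) (fun _ _ h => hreg h)
    (hone.of_le ?_)
  rintro _ ⟨m, hm, rfl⟩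
  obtain ⟨y, hy⟩ := hint m hm
  exact Submodule.mem_one.mpr ⟨y, hy⟩

theorem normalization_finite_of_ideal_contained_in_base_general
    (A : Type*) [CommRing A] [IsNoetherianRing A] [IsReduced A]
    (I : Ideal (integralClosure A (FractionRing A)))
    (hIA : ∀ x ∈ I, (x : FractionRing A) ∈ Set.range (algebraMap A (FractionRing A)))
    (hmin : ∀ P ∈ minimalPrimes (integralClosure A (FractionRing A)), ¬ I ≤ P) :
    Module.Finite A (integralClosure A (FractionRing A)) := by
  have hinj : Function.Injective (algebraMap A (integralClosure A (FractionRing A))) :=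
    fun a b hab => IsFractionRing.injective A (FractionRing A) (congrArg Subtype.val hab)
  have hIA_range : ∀ x ∈ I, x ∈ (algebraMap A (integralClosure A (FractionRing A))).range :=
    fun x hx => let ⟨a, ha⟩ := hIA x hx; ⟨a, Subtype.ext ha⟩
  obtain ⟨d, hdI, hd⟩ := Ideal.exists_mem_nonZeroDivisors_of_forall_not_le_minimalPrimes
    (minimalPrimes.finite_of_isNoetherianRing A)
    fun p hp => Ideal.comap_not_le_of_mem_minimalPrimes hinj hIA_range hmin hp
  have hfrac : IsFractional A⁰ (Subalgebra.toSubmodule (integralClosure A (FractionRing A))) :=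
    ⟨d, hd, fun b hb => by
      obtain ⟨a, ha⟩ := hIA _ (I.mul_mem_right ⟨b, hb⟩ hdI)
      exact ⟨a, by simpa [Algebra.smul_def] using ha⟩⟩
  exact Module.Finite.iff_fg.mpr hfrac.fg

/-- Let `A` be a commutative, Noetherian, reduced ring of Krull
dimension one with normalization `B` (the integral closure of `A` in its total ring of
fractions).  If there is an ideal `I` of `B` which is contained in (the image of) `A`
and which is not contained in any minimal prime of `B`, then `B` is a finitely generated
`A`-module. -/
theorem normalization_finite_of_ideal_contained_in_base
    (A : Type*) [CommRing A] [IsNoetherianRing A] [IsReduced A]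
    (hdim : ringKrullDim A = 1)
    (I : Ideal (integralClosure A (FractionRing A)))
    (hIA : ∀ x ∈ I, (x : FractionRing A) ∈ Set.range (algebraMap A (FractionRing A)))
    (hmin : ∀ P ∈ minimalPrimes (integralClosure A (FractionRing A)), ¬ I ≤ P) :
    Module.Finite A (integralClosure A (FractionRing A)) :=
  normalization_finite_of_ideal_contained_in_base_general A I hIA hmin
end

section
/- Let p be a prime number, K a field extension of ℚ_p which is finite-dimensional as a ℚ_p-vector space, 𝒪 the integral closure of ℤ_p in K, and 𝔭 the set of non-units of 𝒪 (which is the unique maximal ideal of the local ring 𝒪). For an integer s ≥ 1, let A := {z + y : z ∈ image of ℤ_p in 𝒪, y ∈ 𝔭^s}; then A is a subring of 𝒪, A is a local ring whose maximal ideal is 𝔪 = {z + y : z ∈ pℤ_p, y ∈ 𝔭^s} and whose residue field A/𝔪 has exactly p elements, the integral closure of A in K equals 𝒪, and 𝒪 is finite as an A-module. -/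
/-!
The ring of integers `𝒪` is local with maximal ideal `𝔭`, and `ℤ_p → 𝒪` is a local homomorphism
since `𝒪` is integral over `ℤ_p`. If `z + y` (`z ∈ ℤ_p`, `y ∈ 𝔭^s`) is a unit of `𝒪`, then `z` is a
unit and the inverse `u = z⁻¹(1 - y u)` lies in `A = ℤ_p + 𝔭^s` again. Hence `A` and `𝒪` have the
same units, `A` is local with maximal ideal `A ∩ 𝔭 = pℤ_p + 𝔭^s`, and `ℤ_p → A/𝔪` is onto with
kernel `pℤ_p`, so `A/𝔪 ≅ 𝔽_p`. As `ℤ_p ⊆ A ⊆ 𝒪`, integral closure and finiteness of `𝒪` pass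
from `ℤ_p` to `A`.
-/

set_option synthInstance.maxHeartbeats 1000000
set_option maxHeartbeats 1000000

noncomputable section

/-- The subring `A = ℤ_p + 𝔭^s` of the ring of integers `𝒪` of a `p`-adic field. -/
def padicSubring (p : ℕ) [Fact p.Prime] (K : Type*) [Field K] [Algebra ℤ_[p] K]
    (𝔭 : Ideal (integralClosure ℤ_[p] K)) (s : ℕ) :
    Subring (integralClosure ℤ_[p] K) where
  carrier := {x | ∃ z : ℤ_[p], ∃ y ∈ 𝔭 ^ s,
    x = algebraMap ℤ_[p] (integralClosure ℤ_[p] K) z + y}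
  zero_mem' := ⟨0, 0, Submodule.zero_mem _, by simp⟩
  one_mem' := ⟨1, 0, Submodule.zero_mem _, by simp⟩
  add_mem' := by
    rintro a b ⟨z, y, hy, rfl⟩ ⟨z', y', hy', rfl⟩
    exact ⟨z + z', y + y', Submodule.add_mem _ hy hy', by rw [map_add]; ring⟩
  neg_mem' := by
    rintro a ⟨z, y, hy, rfl⟩
    exact ⟨-z, -y, Submodule.neg_mem _ hy, by rw [map_neg]; ring⟩
  mul_mem' := by
    rintro a b ⟨z, y, hy, rfl⟩ ⟨z', y', hy', rfl⟩
    refine ⟨z * z',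
      algebraMap ℤ_[p] (integralClosure ℤ_[p] K) z * y' +
        algebraMap ℤ_[p] (integralClosure ℤ_[p] K) z' * y + y * y', ?_,
      by rw [map_mul]; ring⟩
    exact Submodule.add_mem _
      (Submodule.add_mem _ (Ideal.mul_mem_left _ _ hy') (Ideal.mul_mem_left _ _ hy))
      (Ideal.mul_mem_left _ _ hy')

instance (p : ℕ) [Fact p.Prime] (K : Type*) [Field K] [Algebra ℤ_[p] K]
    (𝔭 : Ideal (integralClosure ℤ_[p] K)) (s : ℕ) :
    Algebra (padicSubring p K 𝔭 s) K :=
  ((algebraMap (integralClosure ℤ_[p] K) K).comp (padicSubring p K 𝔭 s).subtype).toAlgebra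

open IsLocalRing

def Subring.IsRangeAddIdeal {S : Type*} [CommRing S] (A : Subring S) (R : Type*) [CommRing R]
    [Algebra R S] (J : Ideal S) : Prop :=
  ∀ x, x ∈ A ↔ ∃ z : R, ∃ y ∈ J, x = algebraMap R S z + y

namespace Subring.IsRangeAddIdeal

variable {R S : Type*} [CommRing R] [CommRing S] [Algebra R S] {J : Ideal S} {A : Subring S}

theorem algebraMap_mem (hA : A.IsRangeAddIdeal R J) (z : R) : algebraMap R S z ∈ A :=
  (hA _).2 ⟨z, 0, J.zero_mem, (add_zero _).symm⟩

def algebraMapRestrict (hA : A.IsRangeAddIdeal R J) : R →+* A :=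
  (algebraMap R S).codRestrict A hA.algebraMap_mem

variable [IsLocalHom (algebraMap R S)]

theorem isUnit_mk [IsLocalRing S] (hA : A.IsRangeAddIdeal R J) (hJ : J ≤ maximalIdeal S) {a : S}
    (ha : a ∈ A) (hunit : IsUnit a) : IsUnit (⟨a, ha⟩ : A) := by
  obtain ⟨z, y, hy, rfl⟩ := (hA a).1 ha
  have hz : IsUnit z := by
    refine isUnit_of_map_unit (algebraMap R S) z ?_
    exact (isUnit_or_isUnit_of_isUnit_add hunit).resolve_right (hJ hy)
  obtain ⟨w, hw⟩ := hz.exists_right_inv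
  have hw' : algebraMap R S z * algebraMap R S w = 1 := by rw [← map_mul, hw, map_one]
  set u := hunit.unit⁻¹.val
  have hu : (algebraMap R S z + y) * u = 1 := hunit.mul_val_inv
  have hu_eq : u = algebraMap R S w + -(algebraMap R S w * y * u) := by
    linear_combination (algebraMap R S w) * hu - u * hw'
  have hu_mem : u ∈ A := (hA u).2 ⟨w, _, J.neg_mem (J.mul_mem_right _ (J.mul_mem_left _ hy)), hu_eq⟩
  exact .of_mul_eq_one ⟨u, hu_mem⟩ (Subtype.ext hu)

theorem isUnit_iff [IsLocalRing S] (hA : A.IsRangeAddIdeal R J) (hJ : J ≤ maximalIdeal S)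
    {a : A} : IsUnit a ↔ IsUnit (a : S) :=
  ⟨fun h => h.map A.subtype, hA.isUnit_mk hJ a.2⟩

theorem isLocalRing [IsLocalRing S] (hA : A.IsRangeAddIdeal R J) (hJ : J ≤ maximalIdeal S) :
    IsLocalRing A :=
  A.isLocalRing_of_unit fun _ => hA.isUnit_mk hJ

variable [IsLocalRing R] [IsLocalRing A]

theorem mem_maximalIdeal_iff [IsLocalRing S] (hA : A.IsRangeAddIdeal R J)
    (hJ : J ≤ maximalIdeal S) (x : A) :
    x ∈ maximalIdeal A ↔ ∃ z ∈ maximalIdeal R, ∃ y ∈ J, (x : S) = algebraMap R S z + y := by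
  rw [mem_maximalIdeal, mem_nonunits_iff, hA.isUnit_iff hJ, ← mem_nonunits_iff, ← mem_maximalIdeal]
  constructor
  · intro hx
    obtain ⟨z, y, hy, hxy⟩ := (hA x).1 x.2
    refine ⟨z, ?_, y, hy, hxy⟩
    rw [← maximalIdeal_comap (algebraMap R S), Ideal.mem_comap, eq_sub_of_add_eq hxy.symm]
    exact Ideal.sub_mem _ hx (hJ hy)
  · rintro ⟨z, hz, y, hy, hxy⟩
    rw [hxy]
    exact Ideal.add_mem _ (map_nonunit _ z hz) (hJ hy)

theorem residue_comp_algebraMapRestrict_surjective [IsLocalRing S] (hA : A.IsRangeAddIdeal R J)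
    (hJ : J ≤ maximalIdeal S) : Function.Surjective ((residue A).comp hA.algebraMapRestrict) := by
  intro a
  obtain ⟨a, rfl⟩ := residue_surjective a
  obtain ⟨z, y, hy, hay⟩ := (hA a).1 a.2
  refine ⟨z, Ideal.Quotient.eq.2 ((hA.mem_maximalIdeal_iff hJ _).2
    ⟨0, zero_mem _, -y, J.neg_mem hy, ?_⟩)⟩
  simp [algebraMapRestrict, hay]

theorem ker_residue_comp_algebraMapRestrict (hA : A.IsRangeAddIdeal R J) :
    RingHom.ker ((residue A).comp hA.algebraMapRestrict) = maximalIdeal R := by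
  have : IsLocalHom hA.algebraMapRestrict :=
    ⟨fun z hz => isUnit_of_map_unit (algebraMap R S) z (hz.map A.subtype)⟩
  rw [← RingHom.comap_ker, ker_residue, maximalIdeal_comap]

def residueFieldEquiv [IsLocalRing S] (hA : A.IsRangeAddIdeal R J)
    (hJ : J ≤ maximalIdeal S) : ResidueField R ≃+* ResidueField A :=
  (Ideal.quotEquivOfEq hA.ker_residue_comp_algebraMapRestrict.symm).trans
    (RingHom.quotientKerEquivOfSurjective (hA.residue_comp_algebraMapRestrict_surjective hJ))

end Subring.IsRangeAddIdeal

theorem Subring.moduleFinite_of_algebraMap_mem {R S : Type*} [CommRing R] [CommRing S]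
    [Algebra R S] [Module.Finite R S] (A : Subring S) (h : ∀ z, algebraMap R S z ∈ A) :
    Module.Finite A S := by
  let : Algebra R A := ((algebraMap R S).codRestrict A h).toAlgebra
  have : IsScalarTower R A S := .of_algebraMap_eq' rfl
  exact .of_restrictScalars_finite R A S

theorem Subring.coe_integralClosure_eq_of_algebraMap_mem {R K : Type*} [CommRing R] [CommRing K]
    [Algebra R K] (A : Subring (integralClosure R K)) [Algebra A K]
    (hAK : algebraMap A K = (algebraMap (integralClosure R K) K).comp A.subtype)
    (h : ∀ z, algebraMap R (integralClosure R K) z ∈ A) :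
    (integralClosure A K : Set K) = integralClosure R K := by
  ext x
  constructor
  · intro hx
    exact isIntegral_trans x (IsIntegral.map_of_comp_eq A.subtype (RingHom.id K) hAK.symm hx)
  · intro hx
    have hR : (algebraMap A K).comp ((algebraMap R _).codRestrict A h) = algebraMap R K := by
      rw [hAK]; rfl
    have hx' : ((algebraMap A K).comp ((algebraMap R _).codRestrict A h)).IsIntegralElem x := by
      rw [hR]; exact hx
    exact hx'.of_comp

theorem IsLocalRing.of_mem_iff_mem_nonunits {S : Type*} [CommRing S] [Nontrivial S]
    (I : Ideal S) (hI : ∀ x, x ∈ I ↔ x ∈ nonunits S) : IsLocalRing S :=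
  of_nonunits_add fun a b ha hb => (hI _).1 (I.add_mem ((hI a).2 ha) ((hI b).2 hb))

/-- Let `K` be a finite extension of `ℚ_p` with ring of integers `𝒪`
(the integral closure of `ℤ_p` in `K`) and let `𝔭` be the ideal of non-units of `𝒪`.
For `s ≥ 1`, the set `A = ℤ_p + 𝔭^s` is a subring of `𝒪`; it is a local ring with
maximal ideal `pℤ_p + 𝔭^s`, its residue field has exactly `p` elements, the integral
closure of `A` in `K` is `𝒪`, and `𝒪` is finite as an `A`-module. -/
theorem padicSubring_local_with_finite_normalization
    (p : ℕ) [Fact p.Prime]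
    (K : Type*) [Field K] [Algebra ℚ_[p] K] [FiniteDimensional ℚ_[p] K]
    [Algebra ℤ_[p] K] [IsScalarTower ℤ_[p] ℚ_[p] K]
    (𝔭 : Ideal (integralClosure ℤ_[p] K))
    (h𝔭 : ∀ x : integralClosure ℤ_[p] K, x ∈ 𝔭 ↔ x ∈ nonunits (integralClosure ℤ_[p] K))
    (s : ℕ) (hs : 1 ≤ s) :
    ∃ _hloc : IsLocalRing (padicSubring p K 𝔭 s),
      (∀ x : padicSubring p K 𝔭 s,
        x ∈ IsLocalRing.maximalIdeal (padicSubring p K 𝔭 s) ↔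
          ∃ z ∈ Ideal.span {(p : ℤ_[p])}, ∃ y ∈ 𝔭 ^ s,
            (x : integralClosure ℤ_[p] K) =
              algebraMap ℤ_[p] (integralClosure ℤ_[p] K) z + y) ∧
      Nat.card (IsLocalRing.ResidueField (padicSubring p K 𝔭 s)) = p ∧
      ((integralClosure (padicSubring p K 𝔭 s) K : Set K) =
        (integralClosure ℤ_[p] K : Set K)) ∧
      Module.Finite (padicSubring p K 𝔭 s) (integralClosure ℤ_[p] K) := by
  have : IsLocalRing (integralClosure ℤ_[p] K) := .of_mem_iff_mem_nonunits 𝔭 h𝔭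
  obtain rfl : 𝔭 = maximalIdeal _ := Ideal.ext fun x => (h𝔭 x).trans (mem_maximalIdeal x).symm
  have hA : (padicSubring p K (maximalIdeal _) s).IsRangeAddIdeal ℤ_[p] (maximalIdeal _ ^ s) :=
    fun _ => Iff.rfl
  have hJ : maximalIdeal (integralClosure ℤ_[p] K) ^ s ≤ maximalIdeal _ :=
    Ideal.pow_le_self (by omega)
  have : FaithfulSMul ℤ_[p] K := .trans ℤ_[p] ℚ_[p] K
  have : Module.Finite ℤ_[p] (integralClosure ℤ_[p] K) :=
    IsIntegralClosure.finite ℤ_[p] ℚ_[p] K _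
  have := hA.isLocalRing hJ
  refine ⟨this, fun x => ?_, ?_, Subring.coe_integralClosure_eq_of_algebraMap_mem _ rfl
    hA.algebraMap_mem, Subring.moduleFinite_of_algebraMap_mem _ hA.algebraMap_mem⟩
  · rw [hA.mem_maximalIdeal_iff hJ, PadicInt.maximalIdeal_eq_span_p]
  · rw [← Nat.card_congr (hA.residueFieldEquiv hJ).toEquiv,
      Nat.card_congr PadicInt.residueField.toEquiv, Nat.card_zmod]

end
end
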